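/- arXiv:2410.08969 — 8 statements merged into one kernel-verified Lean document; each statement's English description precedes it below -/
import Mathlib

section
/- Let ρ ≠ -2 and x₀ > 0. The function W(t) = (ρ/(ρ+2))·x₀ - (ρ/(ρ+2))·√(x₀² + 2(2+ρ)t), together with x(t) = W(t) + √(x₀² + 2(2+ρ)t), satisfies the ODE system W'(t) = ρ/(W(t) - x(t)) with W(0) = 0, and x'(t) = 2/(x(t) - W(t)) with x(0) = x₀, for all t ≥ 0 with x₀² + 2(2+ρ)t > 0. -/
open Set Filter Topology

/-- The explicit driving function of chordal SLE₀(ρ) with boundary force point `x₀ > 0`: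
`W t = ρ/(ρ+2)·x₀ - ρ/(ρ+2)·√(x₀² + 2(2+ρ)t)`, together with
`x t = W t + √(x₀² + 2(2+ρ)t)`, solves `W' = ρ/(W - x)`, `W 0 = 0`,
and `x' = 2/(x - W)`, `x 0 = x₀`. -/
theorem stmt0 (ρ x₀ : ℝ) (hρ : ρ ≠ -2) (hx₀ : 0 < x₀)
    (W x : ℝ → ℝ)
    (hW : ∀ t, W t = ρ/(ρ+2) * x₀ - ρ/(ρ+2) * Real.sqrt (x₀^2 + 2*(2+ρ)*t))
    (hx : ∀ t, x t = W t + Real.sqrt (x₀^2 + 2*(2+ρ)*t)) :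
    W 0 = 0 ∧ x 0 = x₀ ∧
    ∀ t : ℝ, 0 ≤ t → 0 < x₀^2 + 2*(2+ρ)*t →
      HasDerivAt W (ρ/(W t - x t)) t ∧ HasDerivAt x (2/(x t - W t)) t := by
  have hsq0 : Real.sqrt (x₀^2 + 2*(2+ρ)*0) = x₀ := by
    simp [Real.sqrt_sq hx₀.le]
  refine ⟨by simp [hW 0, Real.sqrt_sq hx₀.le], by simp [hx 0, hW 0, Real.sqrt_sq hx₀.le], ?_⟩
  intro t ht hu
  set u : ℝ → ℝ := fun t => x₀^2 + 2*(2+ρ)*t with hu_def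
  have hsu_pos : 0 < Real.sqrt (u t) := Real.sqrt_pos.mpr hu
  have hsu_ne : Real.sqrt (u t) ≠ 0 := hsu_pos.ne'
  have hρ2 : ρ + 2 ≠ 0 := fun h => hρ (by linarith)
  have hu' : HasDerivAt u (2*(2+ρ)) t := by
    have h := ((hasDerivAt_id t).const_mul (2*(2+ρ))).const_add (x₀^2); rw [mul_one] at h; exact h
  have hs : HasDerivAt (fun t => Real.sqrt (u t)) ((2+ρ)/Real.sqrt (u t)) t := by
    have := (Real.hasDerivAt_sqrt hu.ne').comp t hu'
    refine this.congr_deriv ?_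
    have hne := hsu_ne
    simp only [hu_def] at hne ⊢
    field_simp
  -- W - x = -√u
  have hdiff : W t - x t = -Real.sqrt (u t) := by
    rw [hx t]; ring
  have hWd : HasDerivAt W (ρ/(W t - x t)) t := by
    have h1 : HasDerivAt (fun t => ρ/(ρ+2) * x₀ - ρ/(ρ+2) * Real.sqrt (u t))
        (ρ/(ρ+2) * ((2+ρ)/Real.sqrt (u t)) * (-1) + 0) t := by
      simpa using ((hs.const_mul (ρ/(ρ+2))).const_sub (ρ/(ρ+2) * x₀))
    have h2 : HasDerivAt W (ρ/(ρ+2) * ((2+ρ)/Real.sqrt (u t)) * (-1) + 0) t := by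
      convert h1 using 1
      funext s; exact hW s
    convert h2 using 1
    rw [hdiff]
    have key : ∀ s : ℝ, s ≠ 0 → ρ/(-s) = ρ/(ρ+2) * ((2+ρ)/s) * (-1) + 0 := by
      intro s hs
      rw [div_neg, div_mul_div_comm, show ρ*(2+ρ) = (ρ+2)*ρ by ring,
        mul_div_mul_left _ _ hρ2]
      ring
    exact key _ hsu_ne
  refine ⟨hWd, ?_⟩
  have hxd : HasDerivAt x (ρ/(W t - x t) + (2+ρ)/Real.sqrt (u t)) t := by
    have := hWd.add hs
    exact this.congr_of_eventuallyEq (Filter.Eventually.of_forall hx)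
  have hdiff2 : x t - W t = Real.sqrt (u t) := by
    rw [hx t]; ring
  convert hxd using 1
  rw [hdiff2, hdiff]
  have key : ∀ s : ℝ, s ≠ 0 → 2/s = ρ/(-s) + (2+ρ)/s := by
    intro s hs
    rw [div_neg]; ring
  exact key _ hsu_ne
end

section
/- Let ρ ≠ -2 and v₀ ∈ (0, 2π). Define v(t) - w(t) = 2·arccos(cos(v₀/2)·e^{-(ρ+2)t/4}). Then the pair (w, v), where w(t) = -(ρ/(ρ+2))·(2·arccos(cos(v₀/2)·e^{-(ρ+2)t/4}) - v₀) and v(t) = w(t) + 2·arccos(cos(v₀/2)·e^{-(ρ+2)t/4}), satisfies w'(t) = (ρ/2)·cot((w(t)-v(t))/2) and v'(t) = -cot((w(t)-v(t))/2) with w(0) = 0 and v(0) = v₀, for all t ≥ 0 such that the arccos argument lies in (-1,1). -/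
open Set Filter Topology Real

/-- The explicit driving function of radial SLE₀(ρ) with boundary force point `e^{iv₀}`:
`w t = -(ρ/(ρ+2))·(2·arccos(cos(v₀/2)·e^{-(ρ+2)t/4}) - v₀)` and
`v t = w t + 2·arccos(cos(v₀/2)·e^{-(ρ+2)t/4})` satisfy
`w' = (ρ/2)·cot((w-v)/2)`, `v' = -cot((w-v)/2)`, `w 0 = 0`, `v 0 = v₀`. -/
theorem stmt1 (ρ v₀ : ℝ) (hρ : ρ ≠ -2) (hv₀ : v₀ ∈ Set.Ioo 0 (2*π))
    (w v : ℝ → ℝ)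
    (hw : ∀ t, w t = -(ρ/(ρ+2)) *
      (2 * Real.arccos (Real.cos (v₀/2) * Real.exp (-(ρ+2)*t/4)) - v₀))
    (hv : ∀ t, v t = w t + 2 * Real.arccos (Real.cos (v₀/2) * Real.exp (-(ρ+2)*t/4))) :
    w 0 = 0 ∧ v 0 = v₀ ∧
    ∀ t : ℝ, 0 ≤ t → Real.cos (v₀/2) * Real.exp (-(ρ+2)*t/4) ∈ Set.Ioo (-1 : ℝ) 1 →
      HasDerivAt w (ρ/2 * (Real.cos ((w t - v t)/2) / Real.sin ((w t - v t)/2))) t ∧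
      HasDerivAt v (-(Real.cos ((w t - v t)/2) / Real.sin ((w t - v t)/2))) t := by
  have hπ := Real.pi_pos
  obtain ⟨hv1, hv2⟩ := hv₀
  have hρ2 : ρ + 2 ≠ 0 := by intro h; apply hρ; linarith
  have h0 : Real.arccos (Real.cos (v₀/2) * Real.exp (-(ρ+2)*0/4)) = v₀/2 := by
    rw [show -(ρ+2)*0/4 = 0 by ring, Real.exp_zero, mul_one]
    exact Real.arccos_cos (by linarith) (by linarith)
  refine ⟨by rw [hw 0, h0]; ring, by rw [hv 0, hw 0, h0]; ring, ?_⟩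
  intro t ht hx
  set C : ℝ := Real.cos (v₀/2) with hC
  set x : ℝ := C * Real.exp (-(ρ+2)*t/4) with hxdef
  obtain ⟨hx1, hx2⟩ := hx
  have hs : Real.sqrt (1 - x^2) > 0 := by
    apply Real.sqrt_pos.2; nlinarith
  -- derivative of inner function
  have hinner : HasDerivAt (fun s : ℝ => C * Real.exp (-(ρ+2)*s/4))
      (C * (Real.exp (-(ρ+2)*t/4) * (-(ρ+2)/4))) t := by
    have h1 : HasDerivAt (fun s : ℝ => -(ρ+2)*s/4) (-(ρ+2)/4) t := by
      simpa using (((hasDerivAt_id t).const_mul (-(ρ+2))).div_const 4)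
    exact (h1.exp).const_mul C
  have hA : HasDerivAt (fun s : ℝ => Real.arccos (C * Real.exp (-(ρ+2)*s/4)))
      (-(1 / Real.sqrt (1 - x^2)) * (C * (Real.exp (-(ρ+2)*t/4) * (-(ρ+2)/4)))) t :=
    HasDerivAt.comp (h₂ := Real.arccos) (h := fun s : ℝ => C * Real.exp (-(ρ+2)*s/4)) t
      (Real.hasDerivAt_arccos (ne_of_gt hx1) (ne_of_lt hx2)) hinner
  -- w and v as explicit functions
  have hwfun : w = fun s : ℝ => -(ρ/(ρ+2)) *
      (2 * Real.arccos (C * Real.exp (-(ρ+2)*s/4)) - v₀) := funext hw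
  have hvfun : v = fun s : ℝ => -(ρ/(ρ+2)) *
      (2 * Real.arccos (C * Real.exp (-(ρ+2)*s/4)) - v₀)
      + 2 * Real.arccos (C * Real.exp (-(ρ+2)*s/4)) := by
    funext s; rw [hv s, hw s]
  have hwv : (w t - v t)/2 = -(Real.arccos x) := by
    rw [hv t, ← hxdef]; ring_nf
  have hcos : Real.cos ((w t - v t)/2) = x := by
    rw [hwv, Real.cos_neg, Real.cos_arccos (le_of_lt hx1) (le_of_lt hx2)]
  have hsin : Real.sin ((w t - v t)/2) = -Real.sqrt (1 - x^2) := by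
    rw [hwv, Real.sin_neg, Real.sin_arccos]
  have hDw : HasDerivAt w
      (-(ρ/(ρ+2)) * (2 * (-(1 / Real.sqrt (1 - x^2)) * (C * (Real.exp (-(ρ+2)*t/4) * (-(ρ+2)/4)))))) t := by
    rw [hwfun]
    exact ((hA.const_mul 2).sub_const v₀).const_mul _
  have hDv : HasDerivAt v
      (-(ρ/(ρ+2)) * (2 * (-(1 / Real.sqrt (1 - x^2)) * (C * (Real.exp (-(ρ+2)*t/4) * (-(ρ+2)/4)))))
       + 2 * (-(1 / Real.sqrt (1 - x^2)) * (C * (Real.exp (-(ρ+2)*t/4) * (-(ρ+2)/4))))) t := by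
    rw [hvfun]
    exact (((hA.const_mul 2).sub_const v₀).const_mul _).add (hA.const_mul 2)
  have hrw : C * (Real.exp (-(ρ+2)*t/4) * (-(ρ+2)/4)) = x * (-(ρ+2)/4) := by
    rw [hxdef]; ring
  constructor
  · convert hDw using 1
    rw [hcos, hsin, hrw]
    field_simp
    ring
  · convert hDv using 1
    rw [hcos, hsin, hrw]
    field_simp
    ring
end

section
/- Fix ρ ∈ ℝ, and let ψ(t) = v(t) - w(t) solve the separable ODE ψ'(t) = ((ρ+2)/2)·cot(ψ(t)/2) with ψ(0) = v₀ ∈ (0, 2π). Then for ρ > -2, ψ(t) exists for all t ≥ 0 and ψ(t) → π as t → ∞; for ρ = -2, ψ(t) = v₀ for all t; and for ρ < -2, ψ reaches 0 or 2π in finite time T satisfying e^{(ρ+2)T/4} = |cos(v₀/2)| when v₀ ≠ π. -/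
open Set Filter Topology Real

lemma myaux_mem {x : ℝ} (h : |x| < 1) : 2 * Real.arccos x ∈ Set.Ioo 0 (2*π) := by
  obtain ⟨h1, h2⟩ := abs_lt.1 h
  constructor
  · have := Real.arccos_pos.2 h2; linarith
  · have hle := Real.arccos_le_pi x
    have hne : Real.arccos x ≠ π := by
      rw [Ne, Real.arccos_eq_pi]; linarith
    have := lt_of_le_of_ne hle hne
    linarith

lemma myaux_deriv (a c t : ℝ) (h : |c * Real.exp (a*t)| < 1) :
    HasDerivAt (fun s => 2 * Real.arccos (c * Real.exp (a*s)))
      (-2*a * (Real.cos (2 * Real.arccos (c * Real.exp (a*t)) / 2) /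
        Real.sin (2 * Real.arccos (c * Real.exp (a*t)) / 2))) t := by
  set u := c * Real.exp (a*t) with hu
  obtain ⟨h1, h2⟩ := abs_lt.1 h
  have hu1 : u ≠ 1 := ne_of_lt h2
  have hu2 : u ≠ -1 := ne_of_gt h1
  have hsq : (0:ℝ) < 1 - u^2 := by nlinarith
  have hsqrt : Real.sqrt (1 - u^2) ≠ 0 := ne_of_gt (Real.sqrt_pos.2 hsq)
  have hin : HasDerivAt (fun s => c * Real.exp (a*s)) (u * a) t := by
    have : HasDerivAt (fun s : ℝ => a * s) a t := by
      simpa using (hasDerivAt_id t).const_mul a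
    have := (Real.hasDerivAt_exp (a*t)).comp t this
    have := this.const_mul c
    refine this.congr_deriv ?_
    rw [hu]; ring
  have hd := ((Real.hasDerivAt_arccos hu2 hu1).comp t hin).const_mul 2
  refine hd.congr_deriv ?_
  have hc : Real.cos (2 * Real.arccos u / 2) = u := by
    rw [mul_div_cancel_left₀ _ (two_ne_zero), Real.cos_arccos h1.le h2.le]
  have hs : Real.sin (2 * Real.arccos u / 2) = Real.sqrt (1 - u^2) := by
    rw [mul_div_cancel_left₀ _ (two_ne_zero), Real.sin_arccos]
  rw [hc, hs]
  ring

/-- Phases of the separable ODE `ψ' = ((ρ+2)/2)·cot(ψ/2)`, `ψ 0 = v₀ ∈ (0,2π)`: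
for `ρ > -2` a global solution exists and tends to `π`; for `ρ = -2` any solution is
constant; for `ρ < -2` the solution reaches `0` or `2π` at a finite time `T` with
`e^{(ρ+2)T/4} = |cos(v₀/2)|` (when `v₀ ≠ π`). -/
theorem stmt2 (ρ v₀ : ℝ) (hv₀ : v₀ ∈ Set.Ioo 0 (2*π)) :
    (ρ > -2 → ∃ ψ : ℝ → ℝ, ψ 0 = v₀ ∧
      (∀ t : ℝ, 0 ≤ t → ψ t ∈ Set.Ioo 0 (2*π) ∧
        HasDerivAt ψ ((ρ+2)/2 * (Real.cos (ψ t/2) / Real.sin (ψ t/2))) t) ∧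
      Filter.Tendsto ψ Filter.atTop (nhds π)) ∧
    (ρ = -2 → ∀ ψ : ℝ → ℝ, ψ 0 = v₀ →
      (∀ t : ℝ, 0 ≤ t →
        HasDerivAt ψ ((ρ+2)/2 * (Real.cos (ψ t/2) / Real.sin (ψ t/2))) t) →
      ∀ t : ℝ, 0 ≤ t → ψ t = v₀) ∧
    (ρ < -2 → v₀ ≠ π → ∃ T : ℝ, 0 < T ∧
      Real.exp ((ρ+2)*T/4) = |Real.cos (v₀/2)| ∧
      ∃ ψ : ℝ → ℝ, ψ 0 = v₀ ∧ ContinuousOn ψ (Set.Icc 0 T) ∧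
        (∀ t ∈ Set.Ico (0:ℝ) T, ψ t ∈ Set.Ioo 0 (2*π) ∧
          HasDerivAt ψ ((ρ+2)/2 * (Real.cos (ψ t/2) / Real.sin (ψ t/2))) t) ∧
        (ψ T = 0 ∨ ψ T = 2*π)) := by
  obtain ⟨hv1, hv2⟩ := hv₀
  have hpi := Real.pi_pos
  have hhalf : v₀ / 2 ∈ Set.Ioo 0 π := ⟨by linarith, by linarith⟩
  set c := Real.cos (v₀/2) with hc
  have hclt : c < 1 := by
    have := Real.cos_lt_cos_of_nonneg_of_le_pi (le_refl 0) hhalf.2.le hhalf.1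
    simpa using this
  have hcgt : -1 < c := by
    have := Real.cos_lt_cos_of_nonneg_of_le_pi hhalf.1.le (le_refl π) hhalf.2
    simpa using this
  have hcabs : |c| < 1 := abs_lt.2 ⟨hcgt, hclt⟩
  have harc : Real.arccos c = v₀ / 2 := Real.arccos_cos hhalf.1.le hhalf.2.le
  refine ⟨?_, ?_, ?_⟩
  · -- ρ > -2
    intro hρ
    set a := -(ρ+2)/4 with ha
    have haneg : a < 0 := by rw [ha]; linarith
    refine ⟨fun s => 2 * Real.arccos (c * Real.exp (a*s)), ?_, ?_, ?_⟩
    · simp only [mul_zero, Real.exp_zero, mul_one, harc]; ring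
    · intro t ht
      have habs : |c * Real.exp (a*t)| < 1 := by
        rw [abs_mul, Real.abs_exp]
        calc |c| * Real.exp (a*t) ≤ |c| * 1 := by
              exact mul_le_mul_of_nonneg_left
                (Real.exp_le_one_iff.2 (mul_nonpos_of_nonpos_of_nonneg haneg.le ht)) (abs_nonneg c)
          _ = |c| := mul_one _
          _ < 1 := hcabs
      refine ⟨myaux_mem habs, ?_⟩
      have := myaux_deriv a c t habs
      have h2a : -2*a = (ρ+2)/2 := by rw [ha]; ring
      rw [h2a] at this
      exact this
    · have h1 : Tendsto (fun t : ℝ => a * t) atTop atBot :=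
        (tendsto_const_mul_atBot_of_neg haneg).2 tendsto_id
      have h2 : Tendsto (fun t : ℝ => c * Real.exp (a*t)) atTop (nhds 0) := by
        have := (Real.tendsto_exp_atBot).comp h1
        simpa using this.const_mul c
      have h3 := (Real.continuous_arccos.tendsto 0).comp h2
      have h4 := h3.const_mul 2
      simpa [Function.comp, Real.arccos_zero, show (2:ℝ)*(π/2) = π by ring] using h4
  · -- ρ = -2
    intro hρ ψ hψ0 hd t ht
    subst hρ
    have hd0 : ∀ x ∈ Set.Ico 0 t, HasDerivWithinAt ψ 0 (Set.Ici x) x := by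
      intro x hx
      have := hd x hx.1
      norm_num at this
      exact this.hasDerivWithinAt
    have hcont : ContinuousOn ψ (Set.Icc 0 t) :=
      fun x hx => ((hd x hx.1).continuousAt).continuousWithinAt
    have := constant_of_has_deriv_right_zero hcont hd0 t (Set.right_mem_Icc.2 ht)
    rw [this, hψ0]
  · -- ρ < -2
    intro hρ hvne
    have hc0 : c ≠ 0 := by
      intro h
      apply hvne
      rw [h, Real.arccos_zero] at harc
      linarith
    have hcpos : 0 < |c| := abs_pos.2 hc0
    have hlog : Real.log |c| < 0 := Real.log_neg hcpos hcabs
    have hρ2 : ρ + 2 < 0 := by linarith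
    have hne : ρ + 2 ≠ 0 := ne_of_lt hρ2
    set T := 4 * Real.log |c| / (ρ+2) with hT
    have hTpos : 0 < T := by
      rw [hT]
      exact div_pos_of_neg_of_neg (by linarith) hρ2
    have hexpT : (ρ+2)*T/4 = Real.log |c| := by
      rw [hT]; field_simp [hne]
    set a := -(ρ+2)/4 with ha
    have hapos : 0 < a := by rw [ha]; linarith
    have haT : a * T = -Real.log |c| := by
      rw [ha, hT]; field_simp [hne]
    have hexpaT : Real.exp (a * T) = 1 / |c| := by
      rw [haT, Real.exp_neg, Real.exp_log hcpos, one_div]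
    refine ⟨T, hTpos, ?_, fun s => 2 * Real.arccos (c * Real.exp (a*s)), ?_, ?_, ?_, ?_⟩
    · rw [hexpT, Real.exp_log hcpos]
    · simp only [mul_zero, Real.exp_zero, mul_one, harc]; ring
    · apply Continuous.continuousOn
      exact continuous_const.mul (Real.continuous_arccos.comp
        (continuous_const.mul (Real.continuous_exp.comp (continuous_const.mul continuous_id))))
    · intro t ht
      have habs : |c * Real.exp (a*t)| < 1 := by
        rw [abs_mul, Real.abs_exp]
        have : Real.exp (a*t) < Real.exp (a*T) :=
          Real.exp_lt_exp.2 (by exact mul_lt_mul_of_pos_left ht.2 hapos)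
        calc |c| * Real.exp (a*t) < |c| * Real.exp (a*T) :=
              mul_lt_mul_of_pos_left this hcpos
          _ = |c| * (1/|c|) := by rw [hexpaT]
          _ = 1 := by field_simp
      refine ⟨myaux_mem habs, ?_⟩
      have := myaux_deriv a c t habs
      have h2a : -2*a = (ρ+2)/2 := by rw [ha]; ring
      rw [h2a] at this
      exact this
    · have hval : c * Real.exp (a*T) = c / |c| := by
        rw [hexpaT]; field_simp
      rcases lt_or_gt_of_ne hc0 with hneg | hpos
      · right
        show 2 * Real.arccos (c * Real.exp (a*T)) = 2*π
        rw [hval, abs_of_neg hneg]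
        rw [show c / -c = -1 by field_simp]
        rw [Real.arccos_neg_one]
      · left
        show 2 * Real.arccos (c * Real.exp (a*T)) = 0
        rw [hval, abs_of_pos hpos]
        rw [div_self (ne_of_gt hpos), Real.arccos_one, mul_zero]
end

section
/- Let W : [0,T] → ℝ be absolutely continuous with W(0) = 0, let x₀ > 0, and suppose x : [0,T] → ℝ satisfies x'(t) = 2/(x(t) - W(t)) with x(0) = x₀ and x(t) > W(t) for all t. Then (1/2)∫₀ᵀ (W'(t) - ρ/(W(t)-x(t)))² dt = (1/2)∫₀ᵀ W'(t)² dt - ρ·log(|W(T)-x(T)|/x₀) - (ρ(4+ρ)/4)·log|g_T'(x₀)|, where log|g_T'(x₀)| = -2∫₀ᵀ dt/(x(t)-W(t))². -/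
open Set Filter Topology MeasureTheory intervalIntegral

/-- Integrated formula for the chordal ρ-Loewner energy with boundary force point:
`(1/2)∫₀ᵀ (W' - ρ/(W-x))² = (1/2)∫₀ᵀ (W')² - ρ·log(|W_T - x_T|/x₀) - (ρ(4+ρ)/4)·log|g_T'(x₀)|`
where `log|g_T'(x₀)| = -2∫₀ᵀ dt/(x_t - W_t)²`. -/
theorem stmt3 (ρ x₀ T : ℝ) (hx₀ : 0 < x₀) (hT : 0 < T)
    (W W' x : ℝ → ℝ) (hW0 : W 0 = 0) (hx0 : x 0 = x₀)
    (hWd : ∀ t ∈ Set.Icc (0:ℝ) T, HasDerivAt W (W' t) t)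
    (hxd : ∀ t ∈ Set.Icc (0:ℝ) T, HasDerivAt x (2/(x t - W t)) t)
    (hgt : ∀ t ∈ Set.Icc (0:ℝ) T, W t < x t)
    (hInt : IntervalIntegrable (fun t => (W' t)^2) MeasureTheory.volume 0 T) :
    (1/2) * ∫ t in (0:ℝ)..T, (W' t - ρ/(W t - x t))^2 =
      (1/2) * (∫ t in (0:ℝ)..T, (W' t)^2)
      - ρ * Real.log (|W T - x T| / x₀)
      - ρ*(4+ρ)/4 * (-2 * ∫ t in (0:ℝ)..T, 1/(x t - W t)^2) := by
  have huIcc : Set.uIcc (0:ℝ) T = Set.Icc 0 T := Set.uIcc_of_le hT.le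
  have huIoc : Set.uIoc (0:ℝ) T = Set.Ioc 0 T := Set.uIoc_of_le hT.le
  set u : ℝ → ℝ := fun t => x t - W t with hu
  have hupos : ∀ t ∈ Set.Icc (0:ℝ) T, 0 < u t := fun t ht => sub_pos.2 (hgt t ht)
  have hud : ∀ t ∈ Set.Icc (0:ℝ) T, HasDerivAt u (2 / u t - W' t) t :=
    fun t ht => (hxd t ht).sub (hWd t ht)
  have hucont : ContinuousOn u (Set.Icc 0 T) :=
    fun t ht => ((hud t ht).continuousAt).continuousWithinAt
  have hCcont : ContinuousOn (fun t => 1/(u t)^2) (Set.Icc 0 T) :=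
    ContinuousOn.div continuousOn_const (hucont.pow 2)
      (fun t ht => pow_ne_zero _ (hupos t ht).ne')
  have hicont : ContinuousOn (fun t => 1/(u t)) (Set.Icc 0 T) :=
    ContinuousOn.div continuousOn_const hucont (fun t ht => (hupos t ht).ne')
  have hCint : IntervalIntegrable (fun t => 1/(u t)^2) volume 0 T :=
    (huIcc ▸ hCcont).intervalIntegrable
  -- integrability of W'
  have hmeas : AEStronglyMeasurable W' (volume.restrict (Set.uIoc (0:ℝ) T)) := by
    refine (measurable_deriv W).aestronglyMeasurable.restrict.congr ?_
    rw [huIoc, Filter.EventuallyEq, ae_restrict_iff' measurableSet_Ioc]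
    exact Filter.Eventually.of_forall fun t ht =>
      ((hWd t (Set.mem_Icc_of_Ioc ht)).deriv)
  have hbound : IntervalIntegrable (fun t => (1 + (W' t)^2)/2) volume 0 T :=
    (intervalIntegrable_const.add hInt).div_const 2
  have hW'int : IntervalIntegrable W' volume 0 T := by
    refine hbound.mono_fun hmeas ?_
    refine Filter.Eventually.of_forall fun t => ?_
    simp only [Real.norm_eq_abs]
    have h1 : |W' t| ≤ (1 + (W' t)^2)/2 := by
      nlinarith [sq_nonneg (|W' t| - 1), sq_abs (W' t), abs_nonneg (W' t)]
    have h2 : (0:ℝ) ≤ (1 + (W' t)^2)/2 := by positivity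
    rw [abs_of_nonneg h2]; exact h1
  have hBint : IntervalIntegrable (fun t => W' t * (1/(u t))) volume 0 T :=
    hW'int.mul_continuousOn (huIcc ▸ hicont)
  -- FTC for log u
  have hlogd : ∀ t ∈ Set.uIcc (0:ℝ) T,
      HasDerivAt (fun s => Real.log (u s)) (2*(1/(u t)^2) - W' t * (1/(u t))) t := by
    intro t ht
    rw [huIcc] at ht
    have h := (hud t ht).log (hupos t ht).ne'
    convert h using 1
    rw [sub_div, div_div, ← pow_two]
    ring
  have hFTC := intervalIntegral.integral_eq_sub_of_hasDerivAt hlogd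
    ((hCint.const_mul 2).sub hBint)
  rw [intervalIntegral.integral_sub (hCint.const_mul 2) hBint,
    intervalIntegral.integral_const_mul] at hFTC
  have hu0 : u 0 = x₀ := by simp [hu, hx0, hW0]
  rw [hu0] at hFTC
  -- expand the square
  have hexp : (∫ t in (0:ℝ)..T, (W' t - ρ/(W t - x t))^2)
      = ∫ t in (0:ℝ)..T,
        (((W' t)^2 + (2*ρ) * (W' t * (1/(u t)))) + ρ^2 * (1/(u t)^2)) := by
    refine intervalIntegral.integral_congr fun t ht => ?_
    rw [huIcc] at ht
    have hne : x t - W t ≠ 0 := (hupos t ht).ne'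
    have hne' : W t - x t ≠ 0 := fun h => hne (by linarith [sub_eq_zero.mp h, sub_eq_zero.mpr (sub_eq_zero.mp h)])
    simp only [hu]
    field_simp
    ring
  rw [hexp, intervalIntegral.integral_add (hInt.add (hBint.const_mul (2*ρ)))
      (hCint.const_mul (ρ^2)),
    intervalIntegral.integral_add hInt (hBint.const_mul (2*ρ)),
    intervalIntegral.integral_const_mul, intervalIntegral.integral_const_mul]
  -- rewrite the log term
  have hTmem : T ∈ Set.Icc (0:ℝ) T := ⟨hT.le, le_rfl⟩
  have habs : |W T - x T| = u T := by
    rw [abs_sub_comm]; exact abs_of_pos (hupos T hTmem)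
  rw [habs, Real.log_div (hupos T hTmem).ne' hx₀.ne']
  linear_combination (-ρ : ℝ) * hFTC
end

section
/- Let ρ > -2, and let W : [0,T] → ℝ be absolutely continuous with W(0) = 0, x : [0,T] → ℝ with x'(t) = 2/(x(t)-W(t)), x(0) = x₀ > 0, x(t) > W(t). Then (1/2)∫₀ᵀ (W' - ρ/(W-x))² dt ≥ min((ρ+2)/2, 1)·( min((ρ+2)/2, 1)·(1/2)∫₀ᵀ (W')² dt - |ρ|·log((x(T)-W(T))/x₀) ), and (1/2)∫₀ᵀ (W' - ρ/(W-x))² dt ≤ max((ρ+2)/2, 1)·( max((ρ+2)/2, 1)·(1/2)∫₀ᵀ (W')² dt + |ρ|·log((x(T)-W(T))/x₀) ). -/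
open Set Filter Topology MeasureTheory intervalIntegral

/-- Two-sided comparison bounds between the chordal ρ-Loewner energy with boundary
force point `x₀ > 0` and the ordinary Loewner energy (Proposition 5.2, chordal case). -/
theorem stmt4 (ρ x₀ T : ℝ) (hρ : -2 < ρ) (hx₀ : 0 < x₀) (hT : 0 < T)
    (W W' x : ℝ → ℝ) (hW0 : W 0 = 0) (hx0 : x 0 = x₀)
    (hWd : ∀ t ∈ Set.Icc (0:ℝ) T, HasDerivAt W (W' t) t)
    (hxd : ∀ t ∈ Set.Icc (0:ℝ) T, HasDerivAt x (2/(x t - W t)) t)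
    (hgt : ∀ t ∈ Set.Icc (0:ℝ) T, W t < x t)
    (hInt : IntervalIntegrable (fun t => (W' t)^2) MeasureTheory.volume 0 T)
    (hIntρ : IntervalIntegrable (fun t => (W' t - ρ/(W t - x t))^2)
      MeasureTheory.volume 0 T) :
    (min ((ρ+2)/2) 1 * (min ((ρ+2)/2) 1 * ((1/2) * ∫ t in (0:ℝ)..T, (W' t)^2)
        - |ρ| * Real.log ((x T - W T)/x₀))
      ≤ (1/2) * ∫ t in (0:ℝ)..T, (W' t - ρ/(W t - x t))^2) ∧
    ((1/2) * ∫ t in (0:ℝ)..T, (W' t - ρ/(W t - x t))^2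
      ≤ max ((ρ+2)/2) 1 * (max ((ρ+2)/2) 1 * ((1/2) * ∫ t in (0:ℝ)..T, (W' t)^2)
        + |ρ| * Real.log ((x T - W T)/x₀))) := by
  rcases eq_or_ne ρ 0 with rfl | hρ0
  · simp only [zero_div, sub_zero, abs_zero, zero_mul, add_zero]
    norm_num
  have huIcc : Set.uIcc (0:ℝ) T = Set.Icc 0 T := uIcc_of_le hT.le
  have hvpos : ∀ t ∈ Set.Icc (0:ℝ) T, 0 < x t - W t := fun t ht => sub_pos.2 (hgt t ht)
  have hvderiv : ∀ t ∈ Set.Icc (0:ℝ) T,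
      HasDerivAt (fun s => x s - W s) (2/(x t - W t) - W' t) t :=
    fun t ht => (hxd t ht).sub (hWd t ht)
  have hvcont : ContinuousOn (fun s => x s - W s) (Set.Icc 0 T) :=
    fun t ht => ((hvderiv t ht).continuousAt).continuousWithinAt
  -- integrability of 1/v^2
  have h1v2 : IntervalIntegrable (fun t => 1/(x t - W t)^2) volume 0 T := by
    apply ContinuousOn.intervalIntegrable
    rw [huIcc]
    exact continuousOn_const.div (hvcont.pow 2)
      (fun t ht => pow_ne_zero 2 (hvpos t ht).ne')
  -- key pointwise identity
  have key : ∀ t, (W' t - ρ/(W t - x t))^2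
      = (W' t)^2 + 2*ρ*(W' t/(x t - W t)) + ρ^2*(1/(x t - W t)^2) := by
    intro t
    rcases eq_or_ne (x t - W t) 0 with h | h
    · have h' : W t - x t = 0 := by linarith [sub_eq_zero.1 h]
      rw [h, h']
      simp
    · have h' : W t - x t ≠ 0 := fun hc => h (by linarith [sub_eq_zero.1 hc])
      field_simp
      ring
  -- integrability of W'/v
  have hfv : IntervalIntegrable (fun t => W' t / (x t - W t)) volume 0 T := by
    have h := (((hIntρ.sub hInt).sub (h1v2.const_mul (ρ^2))).const_mul (1/(2*ρ)))
    convert h using 1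
    funext t
    rw [key t]
    field_simp
    ring
  set I0 := ∫ t in (0:ℝ)..T, (W' t)^2 with hI0
  set J := ∫ t in (0:ℝ)..T, 1/(x t - W t)^2 with hJdef
  set K := ∫ t in (0:ℝ)..T, W' t / (x t - W t) with hKdef
  -- expansion of the ρ-energy integral
  have hexp : ∫ t in (0:ℝ)..T, (W' t - ρ/(W t - x t))^2 = I0 + 2*ρ*K + ρ^2*J := by
    have h2 : (∫ t in (0:ℝ)..T,
        ((W' t)^2 + 2*ρ*(W' t/(x t - W t)) + ρ^2*(1/(x t - W t)^2)))
        = I0 + 2*ρ*K + ρ^2*J := by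
      rw [intervalIntegral.integral_add (hInt.add (hfv.const_mul (2*ρ)))
            (h1v2.const_mul (ρ^2)),
          intervalIntegral.integral_add hInt (hfv.const_mul (2*ρ)),
          intervalIntegral.integral_const_mul, intervalIntegral.integral_const_mul]
    rw [← h2]
    exact intervalIntegral.integral_congr (fun t _ => key t)
  -- FTC for log(x - W)
  have hlog : ∫ t in (0:ℝ)..T, (2*(1/(x t - W t)^2) - W' t/(x t - W t))
      = Real.log (x T - W T) - Real.log (x 0 - W 0) := by
    apply intervalIntegral.integral_eq_sub_of_hasDerivAt
    · intro t ht
      rw [huIcc] at ht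
      have hv0 := (hvpos t ht).ne'
      have hd := (hvderiv t ht).log hv0
      refine hd.congr_deriv ?_
      field_simp
    · exact (h1v2.const_mul 2).sub hfv
  have hsplit : ∫ t in (0:ℝ)..T, (2*(1/(x t - W t)^2) - W' t/(x t - W t)) = 2*J - K := by
    rw [intervalIntegral.integral_sub (h1v2.const_mul 2) hfv,
        intervalIntegral.integral_const_mul]
  have hL : Real.log ((x T - W T)/x₀) = 2*J - K := by
    have hvT : 0 < x T - W T := hvpos T (Set.right_mem_Icc.2 hT.le)
    rw [Real.log_div hvT.ne' hx₀.ne', ← hsplit, hlog, hW0, hx0]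
    ring_nf
  have hJ : 0 ≤ J := by
    apply intervalIntegral.integral_nonneg hT.le
    intro t ht
    positivity
  -- Cauchy-Schwarz style bound: K ≤ J + I0/4
  have hK : K ≤ J + (1/4)*I0 := by
    have hmono : K ≤ ∫ t in (0:ℝ)..T, (1/(x t - W t)^2 + (1/4)*(W' t)^2) := by
      apply intervalIntegral.integral_mono_on hT.le hfv
        (h1v2.add (hInt.const_mul (1/4)))
      intro t ht
      have hv := hvpos t ht
      have h1 : W' t / (x t - W t) = W' t * (x t - W t)⁻¹ := div_eq_mul_inv _ _
      have h2 : 1/(x t - W t)^2 = ((x t - W t)⁻¹)^2 := by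
        rw [inv_pow, one_div]
      rw [h1, h2]
      nlinarith [sq_nonneg (W' t - 2*(x t - W t)⁻¹)]
    have heq : (∫ t in (0:ℝ)..T, (1/(x t - W t)^2 + (1/4)*(W' t)^2))
        = J + (1/4)*I0 := by
      rw [intervalIntegral.integral_add h1v2 (hInt.const_mul (1/4)),
          intervalIntegral.integral_const_mul]
    linarith [hmono, heq.le, heq.ge]
  rw [hexp] at *
  rw [hL]
  rcases lt_or_gt_of_ne hρ0 with hneg | hpos
  · -- ρ < 0 : min = (ρ+2)/2, max = 1, |ρ| = -ρ
    have hm : min ((ρ+2)/2) 1 = (ρ+2)/2 := min_eq_left (by linarith)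
    have hM : max ((ρ+2)/2) 1 = 1 := max_eq_right (by linarith)
    have habs : |ρ| = -ρ := abs_of_neg hneg
    have hq : ρ*(ρ+4)/2 ≤ 0 := by nlinarith
    have h1 := mul_le_mul_of_nonpos_left hK hq
    have h2 : ρ*(ρ+4)/2 * J ≤ 0 := mul_nonpos_of_nonpos_of_nonneg hq hJ
    rw [hm, hM, habs]
    constructor
    · linarith [h1]
    · linarith [h2]
  · -- ρ > 0 : min = 1, max = (ρ+2)/2, |ρ| = ρ
    have hm : min ((ρ+2)/2) 1 = 1 := min_eq_right (by linarith)
    have hM : max ((ρ+2)/2) 1 = (ρ+2)/2 := max_eq_left (by linarith)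
    have habs : |ρ| = ρ := abs_of_pos hpos
    have hq : 0 ≤ ρ*(ρ+4)/2 := by nlinarith
    have h1 := mul_le_mul_of_nonneg_left hK hq
    have h2 : 0 ≤ ρ*(ρ+4)/2 * J := mul_nonneg hq hJ
    rw [hm, hM, habs]
    constructor
    · linarith [h2]
    · linarith [h1]
end

section
/- Let w : [0,T] → ℝ be absolutely continuous and v : [0,T] → ℝ with v'(t) = -cot((w(t)-v(t))/2), and suppose sin²((w(t)-v(t))/2) ≥ δ² > 0 for t < T but sin²((w(T)-v(T))/2) ≤ δ². Let ρ ≠ -2 and set I = (1/2)∫₀ᵀ (w'(t) - (ρ/2)·cot((w(t)-v(t))/2))² dt. Then I ≥ -|ρ|·min(1, (ρ+2)/2)·log( δ² / sin²((w(0)-v(0))/2) ). -/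
open Set Filter Topology MeasureTheory intervalIntegral

/-- Key quantitative estimate (Lemma 4.2, radial case): the radial ρ-Loewner energy
blows up as the driving function approaches the force point. -/
theorem stmt5 (ρ δ T : ℝ) (hρ : ρ ≠ -2) (hδ : 0 < δ) (hT : 0 < T)
    (w w' v : ℝ → ℝ)
    (hwd : ∀ t ∈ Set.Icc (0:ℝ) T, HasDerivAt w (w' t) t)
    (hvd : ∀ t ∈ Set.Icc (0:ℝ) T,
      HasDerivAt v (-(Real.cos ((w t - v t)/2) / Real.sin ((w t - v t)/2))) t)
    (hsin : ∀ t ∈ Set.Ico (0:ℝ) T, δ^2 ≤ Real.sin ((w t - v t)/2)^2)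
    (hsinT : Real.sin ((w T - v T)/2)^2 ≤ δ^2)
    (hInt : IntervalIntegrable
      (fun t => (w' t - ρ/2 * (Real.cos ((w t - v t)/2) / Real.sin ((w t - v t)/2)))^2)
      MeasureTheory.volume 0 T) :
    -|ρ| * min 1 ((ρ+2)/2) * Real.log (δ^2 / Real.sin ((w 0 - v 0)/2)^2)
      ≤ (1/2) * ∫ t in (0:ℝ)..T,
          (w' t - ρ/2 * (Real.cos ((w t - v t)/2) / Real.sin ((w t - v t)/2)))^2 := by
  set H : ℝ → ℝ := fun t => Real.cos ((w t - v t)/2) / Real.sin ((w t - v t)/2) with hH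
  set g : ℝ → ℝ := fun t => (w' t - ρ/2 * H t)^2 with hg
  set m : ℝ := |ρ| * min 1 ((ρ+2)/2) with hm
  have hδ2 : (0:ℝ) < δ^2 := by positivity
  have hs0 : δ^2 ≤ Real.sin ((w 0 - v 0)/2)^2 := hsin 0 ⟨le_refl _, hT⟩
  have hs0pos : (0:ℝ) < Real.sin ((w 0 - v 0)/2)^2 := lt_of_lt_of_le hδ2 hs0
  have hIntnn : (0:ℝ) ≤ ∫ t in (0:ℝ)..T, g t :=
    intervalIntegral.integral_nonneg hT.le (fun t _ => sq_nonneg _)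
  have hlogdiv : Real.log (δ^2 / Real.sin ((w 0 - v 0)/2)^2)
      = Real.log (δ^2) - Real.log (Real.sin ((w 0 - v 0)/2)^2) :=
    Real.log_div (ne_of_gt hδ2) (ne_of_gt hs0pos)
  have hlog0 : Real.log (δ^2) ≤ Real.log (Real.sin ((w 0 - v 0)/2)^2) :=
    Real.log_le_log hδ2 hs0
  rw [hlogdiv]
  -- goal now: -m * (log δ² - log s0²) ≤ (1/2)∫ g
  by_cases hmn : m ≤ 0
  · nlinarith [mul_nonneg (neg_nonneg.mpr hmn)
      (sub_nonneg.mpr hlog0)]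
  push_neg at hmn
  have hρ2 : 0 < ρ + 2 := by
    by_contra h
    push_neg at h
    have h1 : min 1 ((ρ+2)/2) ≤ 0 := le_trans (min_le_right _ _) (by linarith)
    exact absurd (mul_nonpos_of_nonneg_of_nonpos (abs_nonneg ρ) h1) (not_le.mpr hmn)
  set c : ℝ := 2 * m with hc
  have hcpos : 0 < c := by positivity
  have hcle : c ≤ 2*ρ + 4 := by
    rcases abs_cases ρ with ⟨h1, h2⟩ | ⟨h1, h2⟩
    · have := min_le_left (1:ℝ) ((ρ+2)/2)
      nlinarith
    · have := min_le_right (1:ℝ) ((ρ+2)/2)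
      nlinarith
  -- function G = log sin²
  set G : ℝ → ℝ := fun t => Real.log (Real.sin ((w t - v t)/2)^2) with hG
  -- derivative of G on Ico 0 T
  have hGd : ∀ t ∈ Set.Ico (0:ℝ) T, HasDerivAt G (H t * (w' t + H t)) t := by
    intro t ht
    have ht' : t ∈ Set.Icc (0:ℝ) T := ⟨ht.1, ht.2.le⟩
    have hsne : Real.sin ((w t - v t)/2) ≠ 0 := by
      intro h
      have := hsin t ht
      rw [h] at this
      nlinarith
    have h1 : HasDerivAt (fun s => (w s - v s)/2) ((w' t + H t)/2) t := by
      have := ((hwd t ht').sub (hvd t ht')).div_const 2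
      refine this.congr_deriv ?_
      rw [hH]
      ring
    have h2 : HasDerivAt (fun s => Real.sin ((w s - v s)/2))
        (Real.cos ((w t - v t)/2) * ((w' t + H t)/2)) t :=
      (Real.hasDerivAt_sin _).comp t h1
    have h3 : HasDerivAt (fun s => Real.sin ((w s - v s)/2)^2)
        (2 * Real.sin ((w t - v t)/2) * (Real.cos ((w t - v t)/2) * ((w' t + H t)/2))) t := by
      have := h2.pow 2
      refine this.congr_deriv ?_
      ring
    have h4 := h3.log (by positivity)
    convert h4 using 1
    simp only [hH]
    field_simp
  -- pointwise inequality
  have hkey : ∀ t ∈ Set.Ico (0:ℝ) T, -(c * (H t * (w' t + H t))) ≤ g t := by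
    intro t _
    have h1 : 0 ≤ c * (2*ρ + 4 - c) := by nlinarith
    simp only [hg]
    nlinarith [sq_nonneg (2 * w' t + (c - ρ) * H t), mul_nonneg h1 (sq_nonneg (H t))]
  -- key estimate for s < T
  have hmain : ∀ s ∈ Set.Ico (0:ℝ) T, c * (G 0 - G s) ≤ ∫ t in (0:ℝ)..T, g t := by
    intro s hs
    have hsub : Set.Icc (0:ℝ) s ⊆ Set.Ico (0:ℝ) T :=
      fun x hx => ⟨hx.1, lt_of_le_of_lt hx.2 hs.2⟩
    have hGc : ContinuousOn G (Set.Icc 0 s) :=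
      fun x hx => ((hGd x (hsub hx)).continuousAt).continuousWithinAt
    have hcont : ContinuousOn (fun t => -(c * G t)) (Set.Icc 0 s) :=
      (continuousOn_const.mul hGc).neg
    have hint2 : IntegrableOn g (Set.Icc (0:ℝ) s) := by
      have h1 : IntervalIntegrable g volume 0 s := by
        apply hInt.mono_set
        rw [Set.uIcc_of_le hs.1, Set.uIcc_of_le hT.le]
        exact Set.Icc_subset_Icc le_rfl hs.2.le
      rw [integrableOn_Icc_iff_integrableOn_Ioc]
      exact h1.1
    have h5 : -(c * G s) - -(c * G 0) ≤ ∫ t in (0:ℝ)..s, g t := by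
      apply sub_le_integral_of_hasDeriv_right_of_le hs.1 hcont
        (g' := fun t => -(c * (H t * (w' t + H t))))
        (fun x hx => (((hGd x (hsub ⟨hx.1.le, hx.2.le⟩)).const_mul c).neg).hasDerivWithinAt)
        hint2 (fun x hx => hkey x (hsub ⟨hx.1.le, hx.2.le⟩))
    have h6 : (∫ t in (0:ℝ)..s, g t) ≤ ∫ t in (0:ℝ)..T, g t := by
      apply intervalIntegral.integral_mono_interval le_rfl hs.1 hs.2.le _ hInt
      filter_upwards with x using sq_nonneg _
    linarith
  -- final limiting argument
  have hfin : ∀ η > (0:ℝ), -m * (Real.log (δ^2) - G 0) ≤ (1/2) * (∫ t in (0:ℝ)..T, g t) + η := by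
    intro η hη
    set ε : ℝ := δ^2 * (Real.exp (2*η/c) - 1) with hε
    have hεpos : 0 < ε := by
      have h1 : Real.exp 0 < Real.exp (2*η/c) := Real.exp_lt_exp.mpr (by positivity)
      rw [Real.exp_zero] at h1
      have h2 : 0 < Real.exp (2*η/c) - 1 := by linarith
      positivity
    -- find s ∈ Ico 0 T with sin² s < δ² + ε
    have hcontT : ContinuousAt (fun t => Real.sin ((w t - v t)/2)^2) T := by
      have hw := (hwd T ⟨hT.le, le_refl T⟩).continuousAt
      have hv := (hvd T ⟨hT.le, le_refl T⟩).continuousAt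
      exact ((Real.continuous_sin.continuousAt).comp ((hw.sub hv).div_const 2)).pow 2
    have hev : ∀ᶠ t in 𝓝[<] T, Real.sin ((w t - v t)/2)^2 < δ^2 + ε := by
      apply Filter.Eventually.filter_mono nhdsWithin_le_nhds
      exact hcontT.eventually_lt continuousAt_const (by linarith)
    have hev2 : ∀ᶠ t in 𝓝[<] T, t ∈ Set.Ico (0:ℝ) T := by
      filter_upwards [Ioo_mem_nhdsLT_of_mem ⟨hT, le_refl T⟩] with x hx
      exact ⟨hx.1.le, hx.2⟩
    obtain ⟨s, hs1, hs2⟩ := (hev.and hev2).exists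
    have hGs : G s ≤ Real.log (δ^2) + 2*η/c := by
      have h1 : Real.sin ((w s - v s)/2)^2 ≤ δ^2 * Real.exp (2*η/c) := by
        have h0 : δ^2 + ε = δ^2 * Real.exp (2*η/c) := by rw [hε]; ring
        linarith
      have h2 : (0:ℝ) < Real.sin ((w s - v s)/2)^2 := lt_of_lt_of_le hδ2 (hsin s hs2)
      calc G s ≤ Real.log (δ^2 * Real.exp (2*η/c)) := Real.log_le_log h2 h1
        _ = Real.log (δ^2) + 2*η/c := by
            rw [Real.log_mul (ne_of_gt hδ2) (ne_of_gt (Real.exp_pos _)), Real.log_exp]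
    have h7 := hmain s hs2
    rw [mul_sub] at h7
    have h8 : c * (2*η/c) = 2*η := by field_simp
    have h10 : c * G s ≤ c * Real.log (δ^2) + 2*η := by
      have h11 := mul_le_mul_of_nonneg_left hGs hcpos.le
      calc c * G s ≤ c * (Real.log (δ^2) + 2*η/c) := h11
        _ = c * Real.log (δ^2) + c*(2*η/c) := by ring
        _ = c * Real.log (δ^2) + 2*η := by rw [h8]
    have h12 : -m * (Real.log (δ^2) - G 0)
        = (c * G 0 - c * Real.log (δ^2))/2 := by rw [hc]; ring
    rw [h12]
    linarith
  -- conclude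
  have h9 : -m * (Real.log (δ^2) - G 0) ≤ (1/2) * ∫ t in (0:ℝ)..T, g t :=
    le_of_forall_pos_le_add hfin
  have hgoal : -|ρ| * min 1 ((ρ+2)/2)
      * (Real.log (δ^2) - Real.log (Real.sin ((w 0 - v 0)/2)^2))
      = -m * (Real.log (δ^2) - G 0) := by
    simp only [hm, hG]
    ring
  rw [hgoal]
  exact h9
end

section
/- Let ρ > -2, and consider positive absolutely continuous functions X, Y on [0,T] satisfying X'(t) = 2/X(t) - W'(t) and Y'(t) = 2/Y(t) + W'(t) for an absolutely continuous W. Set r(t) = Y(t)/(X(t)+Y(t)) ∈ (0,1). Then (1/2)∫₀ᵀ (W'(t) + ρ/X(t))² dt ≥ -(2+ρ)·log((1-r(T))/(1-r(0))) - 2·log(r(T)/r(0)), and for fixed r(0) = 1 - α with α = (ρ+2)/(ρ+4), the right-hand side is strictly positive whenever r(T) ≠ r(0). -/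
open Set Filter Topology MeasureTheory intervalIntegral

-- pointwise algebraic inequality
lemma ptwise (ρ x y a : ℝ) (hx : 0 < x) (hy : 0 < y) :
    -(2+ρ) * ((2/x - a)/x) - 2 * ((2/y + a)/y)
      + (4+ρ) * ((2/x - a + (2/y + a))/(x + y))
    ≤ (1/2) * (a + ρ/x)^2 := by
  have hxy : 0 < x + y := by linarith
  have id1 : (1/2) * (a + ρ/x)^2
      - (-(2+ρ) * ((2/x - a)/x) - 2 * ((2/y + a)/y)
        + (4+ρ) * ((2/x - a + (2/y + a))/(x + y)))
      = (1/2) * ((a + ρ/x - ((2+ρ)/x - 2/y))^2 + ((2+ρ)/x - 2/y)^2) := by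
    field_simp
    ring
  nlinarith [sq_nonneg (a + ρ/x - ((2+ρ)/x - 2/y)), sq_nonneg ((2+ρ)/x - 2/y)]

-- monotone comparison for G
lemma Gmin (ρ : ℝ) (hρ : -2 < ρ) (u v : ℝ) (hu0 : 0 < u) (hu1 : u < 1)
    (hv : v = 2/(ρ+4)) (huv : u ≠ v) :
    -(2+ρ) * Real.log (1-v) - 2 * Real.log v
      < -(2+ρ) * Real.log (1-u) - 2 * Real.log u := by
  have h4 : (0:ℝ) < ρ + 4 := by linarith
  have hv0 : 0 < v := by rw [hv]; positivity
  have hv1 : v < 1 := by rw [hv]; rw [div_lt_one h4]; linarith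
  set G : ℝ → ℝ := fun x => -(2+ρ) * Real.log (1-x) - 2 * Real.log x with hG
  have hd : ∀ x ∈ Ioo (0:ℝ) 1, HasDerivAt G (((ρ+4)*x - 2)/(x*(1-x))) x := by
    intro x hx
    have hx0 : x ≠ 0 := ne_of_gt hx.1
    have hx1 : (1:ℝ) - x ≠ 0 := by have := hx.2; intro h; nlinarith [hx.2]
    have h1 : HasDerivAt (fun x : ℝ => 1 - x) (-1 : ℝ) x := by
      simpa using (hasDerivAt_id x).const_sub 1
    have h2 := (h1.log hx1).const_mul (-(2+ρ))
    have h3 := (Real.hasDerivAt_log hx0).const_mul (2:ℝ)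
    have h := h2.sub h3
    refine HasDerivAt.congr_deriv h ?_
    have hx1' : (0:ℝ) < 1 - x := by nlinarith [hx.2]
    field_simp
    ring
  have hderivG : ∀ x ∈ Ioo (0:ℝ) 1, deriv G x = ((ρ+4)*x - 2)/(x*(1-x)) :=
    fun x hx => (hd x hx).deriv
  have hcont : ∀ s ⊆ Ioo (0:ℝ) 1, ContinuousOn G s := by
    intro s hs x hx
    exact ((hd x (hs hx)).continuousAt).continuousWithinAt
  rcases lt_or_gt_of_ne huv with h | h
  · -- u < v : G strictly anti on [u, v]
    have hsub : Icc u v ⊆ Ioo (0:ℝ) 1 := fun x hx => ⟨lt_of_lt_of_le hu0 hx.1, lt_of_le_of_lt hx.2 hv1⟩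
    have : StrictAntiOn G (Icc u v) := by
      apply strictAntiOn_of_deriv_neg (convex_Icc u v) (hcont _ hsub)
      intro x hx
      rw [interior_Icc] at hx
      have hx' : x ∈ Ioo (0:ℝ) 1 := hsub (Ioo_subset_Icc_self hx)
      rw [hderivG x hx']
      apply div_neg_of_neg_of_pos
      · have hxv : x < 2/(ρ+4) := hv ▸ hx.2
        nlinarith [(lt_div_iff₀ h4).mp hxv]
      · have := hx'.1; have := hx'.2; nlinarith
    exact this (left_mem_Icc.2 h.le) (right_mem_Icc.2 h.le) h
  · -- v < u : G strictly mono on [v, u]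
    have hsub : Icc v u ⊆ Ioo (0:ℝ) 1 := fun x hx => ⟨lt_of_lt_of_le hv0 hx.1, lt_of_le_of_lt hx.2 hu1⟩
    have : StrictMonoOn G (Icc v u) := by
      apply strictMonoOn_of_deriv_pos (convex_Icc v u) (hcont _ hsub)
      intro x hx
      rw [interior_Icc] at hx
      have hx' : x ∈ Ioo (0:ℝ) 1 := hsub (Ioo_subset_Icc_self hx)
      rw [hderivG x hx']
      apply div_pos
      · have hvx : 2/(ρ+4) < x := by rw [← hv]; exact hx.1
        nlinarith [(div_lt_iff₀ h4).mp hvx]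
      · have := hx'.1; have := hx'.2; nlinarith
    exact this (left_mem_Icc.2 h.le) (right_mem_Icc.2 h.le) h

/-- Welding lemma (Lemma 6.7): with `X' = 2/X - W'`, `Y' = 2/Y + W'` positive and
`r = Y/(X+Y)`, the ρ-Loewner energy `(1/2)∫₀ᵀ (W' + ρ/X)²` is bounded below by
`-(2+ρ)·log((1-r_T)/(1-r₀)) - 2·log(r_T/r₀)`, which is strictly positive when
`r₀ = 1 - α`, `α = (ρ+2)/(ρ+4)`, and `r_T ≠ r₀`. -/
theorem stmt10 (ρ T : ℝ) (hρ : -2 < ρ) (hT : 0 < T)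
    (W W' X Y r : ℝ → ℝ)
    (hWd : ∀ t ∈ Set.Icc (0:ℝ) T, HasDerivAt W (W' t) t)
    (hXd : ∀ t ∈ Set.Icc (0:ℝ) T, HasDerivAt X (2/X t - W' t) t)
    (hYd : ∀ t ∈ Set.Icc (0:ℝ) T, HasDerivAt Y (2/Y t + W' t) t)
    (hXpos : ∀ t ∈ Set.Icc (0:ℝ) T, 0 < X t)
    (hYpos : ∀ t ∈ Set.Icc (0:ℝ) T, 0 < Y t)
    (hr : ∀ t, r t = Y t / (X t + Y t))
    (hInt : IntervalIntegrable (fun t => (W' t + ρ/X t)^2) MeasureTheory.volume 0 T) :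
    (-(2+ρ) * Real.log ((1 - r T)/(1 - r 0)) - 2 * Real.log (r T / r 0)
      ≤ (1/2) * ∫ t in (0:ℝ)..T, (W' t + ρ/X t)^2) ∧
    (r 0 = 1 - (ρ+2)/(ρ+4) → r T ≠ r 0 →
      0 < -(2+ρ) * Real.log ((1 - r T)/(1 - r 0)) - 2 * Real.log (r T / r 0)) := by
  have h0T : (0:ℝ) ∈ Icc (0:ℝ) T := ⟨le_refl 0, hT.le⟩
  have hTT : T ∈ Icc (0:ℝ) T := ⟨hT.le, le_refl T⟩
  have hSum : ∀ t ∈ Icc (0:ℝ) T, 0 < X t + Y t :=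
    fun t ht => add_pos (hXpos t ht) (hYpos t ht)
  -- r in (0,1)
  have hr01 : ∀ t ∈ Icc (0:ℝ) T, 0 < r t ∧ r t < 1 := by
    intro t ht
    rw [hr t]
    constructor
    · exact div_pos (hYpos t ht) (hSum t ht)
    · rw [div_lt_one (hSum t ht)]; linarith [hXpos t ht]
  have h1r : ∀ t ∈ Icc (0:ℝ) T, 1 - r t = X t / (X t + Y t) := by
    intro t ht
    rw [hr t, eq_div_iff (hSum t ht).ne', sub_mul, div_mul_cancel₀ _ (hSum t ht).ne']
    ring
  set F : ℝ → ℝ := fun t =>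
    -(2+ρ) * Real.log (X t) - 2 * Real.log (Y t) + (4+ρ) * Real.log (X t + Y t) with hF
  set F' : ℝ → ℝ := fun t =>
    -(2+ρ) * ((2/X t - W' t)/X t) - 2 * ((2/Y t + W' t)/Y t)
      + (4+ρ) * ((2/X t - W' t + (2/Y t + W' t))/(X t + Y t)) with hF'
  have hFd : ∀ t ∈ Icc (0:ℝ) T, HasDerivAt F (F' t) t := by
    intro t ht
    have hX := hXd t ht; have hY := hYd t ht
    have h1 := (hX.log (hXpos t ht).ne').const_mul (-(2+ρ))
    have h2 := (hY.log (hYpos t ht).ne').const_mul (2:ℝ)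
    have h3 := ((hX.add hY).log (hSum t ht).ne').const_mul ((4:ℝ)+ρ)
    exact (h1.sub h2).add h3
  -- FTC inequality
  have key : F T - F 0 ≤ ∫ t in (0:ℝ)..T, (1/2) * (W' t + ρ/X t)^2 := by
    apply sub_le_integral_of_hasDeriv_right_of_le hT.le
    · intro t ht
      exact ((hFd t ht).continuousAt).continuousWithinAt
    · intro t ht
      exact (hFd t (Ioo_subset_Icc_self ht)).hasDerivWithinAt
    · have := ((intervalIntegrable_iff_integrableOn_Icc_of_le hT.le).mp hInt).const_mul ((1:ℝ)/2)
      simpa [IntegrableOn] using this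
    · intro t ht
      exact ptwise ρ (X t) (Y t) (W' t) (hXpos t (Ioo_subset_Icc_self ht))
        (hYpos t (Ioo_subset_Icc_self ht))
  have hlogeq : -(2+ρ) * Real.log ((1 - r T)/(1 - r 0)) - 2 * Real.log (r T / r 0)
      = F T - F 0 := by
    rw [h1r T hTT, h1r 0 h0T, hr T, hr 0]
    rw [Real.log_div (div_pos (hXpos T hTT) (hSum T hTT)).ne'
          (div_pos (hXpos 0 h0T) (hSum 0 h0T)).ne',
        Real.log_div (div_pos (hYpos T hTT) (hSum T hTT)).ne'
          (div_pos (hYpos 0 h0T) (hSum 0 h0T)).ne',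
        Real.log_div (hXpos T hTT).ne' (hSum T hTT).ne',
        Real.log_div (hXpos 0 h0T).ne' (hSum 0 h0T).ne',
        Real.log_div (hYpos T hTT).ne' (hSum T hTT).ne',
        Real.log_div (hYpos 0 h0T).ne' (hSum 0 h0T).ne']
    simp only [hF]
    ring
  constructor
  · rw [hlogeq]
    calc F T - F 0 ≤ ∫ t in (0:ℝ)..T, (1/2) * (W' t + ρ/X t)^2 := key
      _ = (1/2) * ∫ t in (0:ℝ)..T, (W' t + ρ/X t)^2 := by
          rw [intervalIntegral.integral_const_mul]
  · intro hr0 hne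
    have h4' : ρ + 4 ≠ 0 := by intro h; linarith
    have hv : r 0 = 2/(ρ+4) := by
      rw [hr0, eq_div_iff h4', sub_mul, div_mul_cancel₀ _ h4']; ring
    have h01 := hr01 T hTT
    have h010 := hr01 0 h0T
    have hG := Gmin ρ hρ (r T) (r 0) h01.1 h01.2 hv hne
    have l1 : Real.log ((1 - r T)/(1 - r 0)) = Real.log (1 - r T) - Real.log (1 - r 0) :=
      Real.log_div (by linarith [h01.2]) (by linarith [h010.2])
    have l2 : Real.log (r T / r 0) = Real.log (r T) - Real.log (r 0) :=
      Real.log_div (ne_of_gt h01.1) (ne_of_gt h010.1)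
    rw [l1, l2]
    rw [hv] at hG ⊢
    linarith [hG]
end

section
/- Fix ρ < -4 and z₀ ∈ ℍ, and let γ : (0,T) → ℍ∖{z₀} be a simple curve with γ(0+) = 0 and γ(T-) = z₀. Then the chordal ρ-Loewner energy I_ρ(γ) with interior force point z₀ is finite if and only if the ordinary chordal Loewner energy I(γ) is finite; moreover, if they are finite then, writing θ_t = arg(g_t(z₀) - W_t), sin θ_t → 1 as t → T-, i.e., -log sin θ_t → 0. -/
open Set Filter Topology MeasureTheory ENNReal

noncomputable section Stmt15Aux

namespace S15

variable (W W' : ℝ → ℝ) (z : ℝ → ℂ) (T : ℝ)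

def ww (t : ℝ) : ℂ := z t - (W t : ℂ)
def XX (t : ℝ) : ℝ := (ww W z t).re
def YY (t : ℝ) : ℝ := (ww W z t).im
def R2 (t : ℝ) : ℝ := Complex.normSq (ww W z t)
def UU (t : ℝ) : ℝ := Real.log (R2 W z t) / 2 - Real.log (YY W z t)
def SS (t : ℝ) : ℝ := - Real.log (YY W z t)
def QQ (t : ℝ) : ℝ := XX W z t ^ 2 / R2 W z t ^ 2

variable {W W' : ℝ → ℝ} {z : ℝ → ℂ} {T : ℝ}

abbrev HIM (W : ℝ → ℝ) (z : ℝ → ℂ) (T : ℝ) : Prop := ∀ t ∈ Set.Ico (0:ℝ) T, 0 < (z t).im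

section Pointwise

lemma Ypos (him : HIM W z T) : ∀ t ∈ Set.Ico (0:ℝ) T, 0 < YY W z t := by
  intro t ht
  have := him t ht
  simp [YY, ww, Complex.sub_im, Complex.ofReal_im]
  exact this

lemma wne (him : HIM W z T) (t : ℝ) (ht : t ∈ Set.Ico (0:ℝ) T) : ww W z t ≠ 0 := by
  intro h
  have := Ypos him t ht
  rw [YY, h] at this
  simp at this

lemma R2pos (him : HIM W z T) (t : ℝ) (ht : t ∈ Set.Ico (0:ℝ) T) : 0 < R2 W z t :=
  Complex.normSq_pos.2 (wne him t ht)

lemma R2eq (t : ℝ) : R2 W z t = XX W z t ^ 2 + YY W z t ^ 2 := by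
  simp [R2, XX, YY, Complex.normSq_apply, sq]

lemma Ysq_le (t : ℝ) : YY W z t ^ 2 ≤ R2 W z t := by
  rw [R2eq]; nlinarith [sq_nonneg (XX W z t)]

lemma UUnonneg (him : HIM W z T) (t : ℝ) (ht : t ∈ Set.Ico (0:ℝ) T) : 0 ≤ UU W z t := by
  have hY := Ypos him t ht
  have hR := R2pos him t ht
  have h1 : Real.log (YY W z t) ≤ Real.log (R2 W z t) / 2 := by
    have : Real.log (YY W z t ^ 2) ≤ Real.log (R2 W z t) :=
      Real.log_le_log (by positivity) (Ysq_le t)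
    rw [Real.log_pow] at this
    push_cast at this
    linarith
  simp only [UU]; linarith

lemma expUU (him : HIM W z T) (t : ℝ) (ht : t ∈ Set.Ico (0:ℝ) T) :
    YY W z t ^ 2 / R2 W z t = Real.exp (-2 * UU W z t) := by
  have hY := Ypos him t ht
  have hR := R2pos him t ht
  have : Real.log (YY W z t ^ 2 / R2 W z t) = -2 * UU W z t := by
    rw [Real.log_div (by positivity) (ne_of_gt hR), Real.log_pow]
    simp [UU]; ring
  rw [← this, Real.exp_log (by positivity)]

lemma region (him : HIM W z T) (t : ℝ) (ht : t ∈ Set.Ico (0:ℝ) T) (m : ℝ) (hm : m ≤ UU W z t) :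
    (1 - Real.exp (-2 * m)) * (1 / R2 W z t) ≤ QQ W z t := by
  have hY := Ypos him t ht
  have hR := R2pos him t ht
  have h1 : YY W z t ^ 2 / R2 W z t ≤ Real.exp (-2 * m) := by
    rw [expUU him t ht]
    exact Real.exp_le_exp.2 (by linarith)
  have h2 : (1 - Real.exp (-2*m)) ≤ XX W z t ^ 2 / R2 W z t := by
    have : XX W z t ^2 / R2 W z t + YY W z t ^2 / R2 W z t = 1 := by
      field_simp
      rw [R2eq]
    linarith
  have h3 : (1 - Real.exp (-2*m)) * (1/R2 W z t) ≤ (XX W z t^2/R2 W z t) * (1/R2 W z t) := by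
    apply mul_le_mul_of_nonneg_right h2 (by positivity)
  calc (1 - Real.exp (-2 * m)) * (1 / R2 W z t) ≤ (XX W z t^2/R2 W z t) * (1/R2 W z t) := h3
    _ = QQ W z t := by rw [QQ]; rw [mul_one_div, div_div, ← pow_two]

end Pointwise

abbrev HWD (W W' : ℝ → ℝ) (T : ℝ) : Prop := ∀ t ∈ Set.Ico (0:ℝ) T, HasDerivAt W (W' t) t
abbrev HZD (W : ℝ → ℝ) (z : ℝ → ℂ) (T : ℝ) : Prop :=
  ∀ t ∈ Set.Ico (0:ℝ) T, HasDerivAt z (2/(z t - (W t : ℂ))) t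

section Deriv

lemma hasDerivAt_ww (hWd : HWD W W' T) (hzd : HZD W z T) (t : ℝ) (ht : t ∈ Set.Ico (0:ℝ) T) :
    HasDerivAt (ww W z) (2/(ww W z t) - (W' t : ℂ)) t := by
  have h1 := (hzd t ht).sub ((hWd t ht).ofReal_comp)
  exact h1

lemma hasDerivAt_XX (him : HIM W z T) (hWd : HWD W W' T) (hzd : HZD W z T)
    (t : ℝ) (ht : t ∈ Set.Ico (0:ℝ) T) :
    HasDerivAt (XX W z) (2 * XX W z t / R2 W z t - W' t) t := by
  have h1 := (Complex.reCLM.hasFDerivAt.comp_hasDerivAt t (hasDerivAt_ww hWd hzd t ht))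
  convert h1 using 1
  any_goals rfl
  simp [XX, R2, Complex.div_re, Complex.normSq_apply, ww]
  all_goals ring

lemma hasDerivAt_YY (him : HIM W z T) (hWd : HWD W W' T) (hzd : HZD W z T)
    (t : ℝ) (ht : t ∈ Set.Ico (0:ℝ) T) :
    HasDerivAt (YY W z) (-2 * YY W z t / R2 W z t) t := by
  have h1 := (Complex.imCLM.hasFDerivAt.comp_hasDerivAt t (hasDerivAt_ww hWd hzd t ht))
  convert h1 using 1
  any_goals rfl
  simp [YY, R2, Complex.div_im, Complex.normSq_apply, ww]
  all_goals ring

lemma hasDerivAt_R2 (him : HIM W z T) (hWd : HWD W W' T) (hzd : HZD W z T)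
    (t : ℝ) (ht : t ∈ Set.Ico (0:ℝ) T) :
    HasDerivAt (R2 W z)
      (2 * XX W z t * (2 * XX W z t / R2 W z t - W' t)
        + 2 * YY W z t * (-2 * YY W z t / R2 W z t)) t := by
  have h1 := ((hasDerivAt_XX him hWd hzd t ht).pow 2).add ((hasDerivAt_YY him hWd hzd t ht).pow 2)
  have he : (R2 W z) = fun t => XX W z t ^ 2 + YY W z t ^ 2 := funext (R2eq)
  rw [he]
  convert h1 using 1
  any_goals rfl
  rw [R2eq]
  ring

lemma hasDerivAt_UU (him : HIM W z T) (hWd : HWD W W' T) (hzd : HZD W z T)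
    (t : ℝ) (ht : t ∈ Set.Ico (0:ℝ) T) :
    HasDerivAt (UU W z) (4 * QQ W z t - W' t * (XX W z t / R2 W z t)) t := by
  have hY := Ypos him t ht
  have hR := R2pos him t ht
  have h1 := ((hasDerivAt_R2 him hWd hzd t ht).log (ne_of_gt hR)).div_const 2
  have h2 := (hasDerivAt_YY him hWd hzd t ht).log (ne_of_gt hY)
  have h3 := h1.sub h2
  have he : (UU W z) = fun t => Real.log (R2 W z t) / 2 - Real.log (YY W z t) := rfl
  rw [he]
  convert h3 using 1
  any_goals rfl
  have hR' : XX W z t ^ 2 + YY W z t ^ 2 ≠ 0 := by rw [← R2eq]; exact ne_of_gt hR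
  rw [QQ, R2eq]
  field_simp
  ring

lemma hasDerivAt_SS (him : HIM W z T) (hWd : HWD W W' T) (hzd : HZD W z T)
    (t : ℝ) (ht : t ∈ Set.Ico (0:ℝ) T) :
    HasDerivAt (SS W z) (2 / R2 W z t) t := by
  have hY := Ypos him t ht
  have hR := R2pos him t ht
  have h2 := ((hasDerivAt_YY him hWd hzd t ht).log (ne_of_gt hY)).neg
  have he : (SS W z) = fun t => -Real.log (YY W z t) := rfl
  rw [he]
  convert h2 using 1
  any_goals rfl
  field_simp

lemma contOn_XX (him : HIM W z T) (hWd : HWD W W' T) (hzd : HZD W z T) :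
    ContinuousOn (XX W z) (Set.Ico 0 T) := fun t ht =>
  (hasDerivAt_XX him hWd hzd t ht).continuousAt.continuousWithinAt

lemma contOn_R2 (him : HIM W z T) (hWd : HWD W W' T) (hzd : HZD W z T) :
    ContinuousOn (R2 W z) (Set.Ico 0 T) := fun t ht =>
  (hasDerivAt_R2 him hWd hzd t ht).continuousAt.continuousWithinAt

lemma contOn_UU (him : HIM W z T) (hWd : HWD W W' T) (hzd : HZD W z T) :
    ContinuousOn (UU W z) (Set.Ico 0 T) := fun t ht =>
  (hasDerivAt_UU him hWd hzd t ht).continuousAt.continuousWithinAt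

lemma contOn_SS (him : HIM W z T) (hWd : HWD W W' T) (hzd : HZD W z T) :
    ContinuousOn (SS W z) (Set.Ico 0 T) := fun t ht =>
  (hasDerivAt_SS him hWd hzd t ht).continuousAt.continuousWithinAt

lemma contOn_QQ (him : HIM W z T) (hWd : HWD W W' T) (hzd : HZD W z T) :
    ContinuousOn (QQ W z) (Set.Ico 0 T) := by
  apply ContinuousOn.div
  · exact (contOn_XX him hWd hzd).pow 2
  · exact (contOn_R2 him hWd hzd).pow 2
  · intro t ht
    exact pow_ne_zero 2 (ne_of_gt (R2pos him t ht))

lemma contOn_invR2 (him : HIM W z T) (hWd : HWD W W' T) (hzd : HZD W z T) :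
    ContinuousOn (fun t => 1 / R2 W z t) (Set.Ico 0 T) := by
  apply ContinuousOn.div continuousOn_const (contOn_R2 him hWd hzd)
  intro t ht; exact ne_of_gt (R2pos him t ht)

lemma contOn_XdivR2 (him : HIM W z T) (hWd : HWD W W' T) (hzd : HZD W z T) :
    ContinuousOn (fun t => XX W z t / R2 W z t) (Set.Ico 0 T) := by
  apply ContinuousOn.div (contOn_XX him hWd hzd) (contOn_R2 him hWd hzd)
  intro t ht; exact ne_of_gt (R2pos him t ht)

end Deriv

section FTC

lemma uIcc_sub {t₁ t₂ : ℝ} (h0 : 0 ≤ t₁) (h12 : t₁ ≤ t₂) (h2T : t₂ < T) :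
    Set.uIcc t₁ t₂ ⊆ Set.Ico (0:ℝ) T := by
  rw [Set.uIcc_of_le h12]
  exact fun s hs => ⟨le_trans h0 hs.1, lt_of_le_of_lt hs.2 h2T⟩

lemma integrand_intble (him : HIM W z T) (hWd : HWD W W' T) (hzd : HZD W z T)
    {t₁ t₂ : ℝ} (h0 : 0 ≤ t₁) (h12 : t₁ ≤ t₂) (h2T : t₂ < T)
    (hWint : IntervalIntegrable W' volume t₁ t₂) :
    IntervalIntegrable (fun t => 4 * QQ W z t - W' t * (XX W z t / R2 W z t)) volume t₁ t₂ := by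
  have hsub := uIcc_sub (T := T) h0 h12 h2T
  apply IntervalIntegrable.sub
  · exact (((contOn_QQ him hWd hzd).mono hsub).const_smul (4:ℝ)).intervalIntegrable
  · exact hWint.mul_continuousOn ((contOn_XdivR2 him hWd hzd).mono hsub)

lemma UU_FTC (him : HIM W z T) (hWd : HWD W W' T) (hzd : HZD W z T)
    {t₁ t₂ : ℝ} (h0 : 0 ≤ t₁) (h12 : t₁ ≤ t₂) (h2T : t₂ < T)
    (hWint : IntervalIntegrable W' volume t₁ t₂) :
    UU W z t₂ - UU W z t₁
      = ∫ t in t₁..t₂, (4 * QQ W z t - W' t * (XX W z t / R2 W z t)) := by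
  have hsub := uIcc_sub (T := T) h0 h12 h2T
  rw [intervalIntegral.integral_eq_sub_of_hasDerivAt
    (fun s hs => hasDerivAt_UU him hWd hzd s (hsub hs))
    (integrand_intble him hWd hzd h0 h12 h2T hWint)]

lemma SS_FTC (him : HIM W z T) (hWd : HWD W W' T) (hzd : HZD W z T)
    {t₁ t₂ : ℝ} (h0 : 0 ≤ t₁) (h12 : t₁ ≤ t₂) (h2T : t₂ < T) :
    SS W z t₂ - SS W z t₁ = ∫ t in t₁..t₂, 2 / R2 W z t := by
  have hsub := uIcc_sub (T := T) h0 h12 h2T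
  rw [intervalIntegral.integral_eq_sub_of_hasDerivAt
    (fun s hs => hasDerivAt_SS him hWd hzd s (hsub hs))
    (ContinuousOn.intervalIntegrable (by
      apply ContinuousOn.div continuousOn_const ((contOn_R2 him hWd hzd).mono hsub)
      exact fun s hs => ne_of_gt (R2pos him s (hsub hs))))]

lemma grow (him : HIM W z T) (hWd : HWD W W' T) (hzd : HZD W z T)
    {t₁ t₂ m : ℝ} (h0 : 0 ≤ t₁) (h12 : t₁ ≤ t₂) (h2T : t₂ < T)
    (hWint : IntervalIntegrable W' volume t₁ t₂)
    (hW2int : IntervalIntegrable (fun t => W' t ^ 2) volume t₁ t₂)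
    (hreg : ∀ s ∈ Set.Icc t₁ t₂, m ≤ UU W z s) :
    UU W z t₁ + (3 * (1 - Real.exp (-2*m)) / 2) * (SS W z t₂ - SS W z t₁)
      - (1/4) * (∫ t in t₁..t₂, W' t ^ 2) ≤ UU W z t₂ := by
  have hsub := uIcc_sub (T := T) h0 h12 h2T
  have hIcc : Set.Icc t₁ t₂ ⊆ Set.Ico 0 T := by
    rw [← Set.uIcc_of_le h12]; exact hsub
  set c : ℝ := 3 * (1 - Real.exp (-2*m)) / 2 with hc
  have key : ∀ s ∈ Set.Icc t₁ t₂,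
      c * (2 / R2 W z s) - W' s ^ 2 / 4
        ≤ 4 * QQ W z s - W' s * (XX W z s / R2 W z s) := by
    intro s hs
    have hsI := hIcc hs
    have hR := R2pos him s hsI
    have hreg' := region him s hsI m (hreg s hs)
    have hQ : (XX W z s / R2 W z s) ^ 2 = QQ W z s := by
      rw [QQ, div_pow]
    have hyoung : W' s * (XX W z s / R2 W z s) ≤ QQ W z s + W' s ^ 2 / 4 := by
      nlinarith [sq_nonneg (XX W z s / R2 W z s - W' s / 2)]
    have hcc : c * (2 / R2 W z s) = 3 * ((1 - Real.exp (-2*m)) * (1 / R2 W z s)) := by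
      rw [hc]; ring
    rw [hcc]
    nlinarith [hreg']
  have hlow_int : IntervalIntegrable
      (fun s => c * (2 / R2 W z s) - W' s ^ 2 / 4) volume t₁ t₂ := by
    apply IntervalIntegrable.sub
    · apply ContinuousOn.intervalIntegrable
      apply ContinuousOn.const_smul _ c
      apply ContinuousOn.div continuousOn_const ((contOn_R2 him hWd hzd).mono hsub)
      exact fun s hs => ne_of_gt (R2pos him s (hsub hs))
    · exact hW2int.div_const 4
  have hmono := intervalIntegral.integral_mono_on h12 hlow_int
    (integrand_intble him hWd hzd h0 h12 h2T hWint) key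
  rw [← UU_FTC him hWd hzd h0 h12 h2T hWint] at hmono
  rw [intervalIntegral.integral_sub (by
      apply ContinuousOn.intervalIntegrable
      apply ContinuousOn.const_smul _ c
      apply ContinuousOn.div continuousOn_const ((contOn_R2 him hWd hzd).mono hsub)
      exact fun s hs => ne_of_gt (R2pos him s (hsub hs))) (hW2int.div_const 4),
    intervalIntegral.integral_const_mul, intervalIntegral.integral_div,
    ← SS_FTC him hWd hzd h0 h12 h2T] at hmono
  linarith

end FTC

section Limits

abbrev HEND (W : ℝ → ℝ) (z : ℝ → ℂ) (T : ℝ) : Prop :=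
  Tendsto (fun t => ‖z t - (W t : ℂ)‖) (nhdsWithin T (Set.Iio T)) (nhds 0)

lemma ev_mem (hT : 0 < T) : ∀ᶠ t in 𝓝[<] T, t ∈ Set.Ioo (0:ℝ) T := by
  have h1 : ∀ᶠ t in 𝓝[<] T, t ∈ Set.Iio T := eventually_mem_nhdsWithin
  have h2 : ∀ᶠ t in 𝓝[<] T, (0:ℝ) < t :=
    eventually_nhdsWithin_of_eventually_nhds (eventually_gt_nhds hT)
  filter_upwards [h1, h2] with t ht1 ht2
  exact ⟨ht2, ht1⟩

lemma tendsto_R2_zero (hend : HEND W z T) : Tendsto (R2 W z) (𝓝[<] T) (𝓝 0) := by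
  have := hend.mul hend
  rw [mul_zero] at this
  apply this.congr
  intro t
  rw [R2, ww, ← Complex.sq_norm, sq]

lemma tendsto_L_atTop (him : HIM W z T) (hT : 0 < T) (hend : HEND W z T) :
    Tendsto (fun t => -Real.log (R2 W z t)) (𝓝[<] T) atTop := by
  have h1 : Tendsto (R2 W z) (𝓝[<] T) (𝓝[>] (0:ℝ)) := by
    rw [tendsto_nhdsWithin_iff]
    refine ⟨tendsto_R2_zero hend, ?_⟩
    filter_upwards [ev_mem hT] with t ht
    exact R2pos him t (Set.Ioo_subset_Ico_self ht)
  have h2 : Tendsto (fun t => Real.log (R2 W z t)) (𝓝[<] T) atBot :=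
    Real.tendsto_log_nhdsGT_zero.comp h1
  exact tendsto_neg_atTop_iff.mpr h2

lemma SS_eq (t : ℝ) : SS W z t = UU W z t + (-Real.log (R2 W z t)) / 2 := by
  rw [SS, UU]; ring

lemma tendsto_SS_atTop (him : HIM W z T) (hT : 0 < T) (hend : HEND W z T) :
    Tendsto (SS W z) (𝓝[<] T) atTop := by
  have hL2 : Tendsto (fun t => (-Real.log (R2 W z t)) / 2) (𝓝[<] T) atTop :=
    (tendsto_L_atTop him hT hend).atTop_div_const (by norm_num)
  apply tendsto_atTop_mono' _ _ hL2
  filter_upwards [ev_mem hT] with t ht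
  rw [SS_eq]
  have := UUnonneg him t (Set.Ioo_subset_Ico_self ht)
  linarith

lemma tendsto_SU_atTop (hT : 0 < T) (him : HIM W z T) (hend : HEND W z T) :
    Tendsto (fun t => SS W z t - UU W z t) (𝓝[<] T) atTop := by
  have h := (tendsto_L_atTop him hT hend).atTop_div_const (show (0:ℝ) < 2 by norm_num)
  apply h.congr
  intro t
  rw [SS_eq]; ring

end Limits

section Meas

lemma aemW' (hT : 0 < T) (hWd : HWD W W' T) :
    AEMeasurable W' (volume.restrict (Set.Ioo 0 T)) := by
  apply (measurable_deriv W).aemeasurable.congr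
  apply (ae_restrict_iff' measurableSet_Ioo).2
  apply ae_of_all
  intro t ht
  exact ((hWd t (Set.Ioo_subset_Ico_self ht)).deriv).symm ▸ rfl

lemma integrableOn_of_sq {f : ℝ → ℝ} (hae : AEMeasurable f (volume.restrict (Set.Ioo 0 T)))
    (hfin : ∫⁻ t in Set.Ioo (0:ℝ) T, ENNReal.ofReal ((1/2) * f t ^ 2) < ⊤) :
    IntegrableOn (fun t => f t ^ 2) (Set.Ioo 0 T) volume := by
  have haes : AEStronglyMeasurable (fun t => f t ^ 2) (volume.restrict (Set.Ioo 0 T)) :=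
    ((hae.pow_const 2).aestronglyMeasurable)
  refine ⟨haes, ?_⟩
  rw [hasFiniteIntegral_iff_ofReal (ae_of_all _ (fun t => sq_nonneg (f t)))]
  have hb : ∀ t, ENNReal.ofReal (f t ^ 2)
      ≤ ENNReal.ofReal 2 * ENNReal.ofReal ((1/2) * f t ^ 2) := by
    intro t
    rw [← ENNReal.ofReal_mul (by norm_num)]
    apply ENNReal.ofReal_le_ofReal
    nlinarith [sq_nonneg (f t)]
  calc ∫⁻ t in Set.Ioo (0:ℝ) T, ENNReal.ofReal (f t ^ 2)
      ≤ ∫⁻ t in Set.Ioo (0:ℝ) T, ENNReal.ofReal 2 * ENNReal.ofReal ((1/2) * f t ^ 2) :=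
        lintegral_mono hb
    _ = ENNReal.ofReal 2 * ∫⁻ t in Set.Ioo (0:ℝ) T, ENNReal.ofReal ((1/2) * f t ^ 2) :=
        lintegral_const_mul' _ _ (by simp)
    _ < ⊤ := ENNReal.mul_lt_top ENNReal.ofReal_lt_top hfin

lemma integrableOn_self_of_sq {f : ℝ → ℝ}
    (hae : AEMeasurable f (volume.restrict (Set.Ioo 0 T)))
    (hsq : IntegrableOn (fun t => f t ^ 2) (Set.Ioo 0 T) volume) :
    IntegrableOn f (Set.Ioo 0 T) volume := by
  have hg : IntegrableOn (fun t => 1 + f t ^ 2) (Set.Ioo 0 T) volume := by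
    apply Integrable.add _ hsq
    exact integrableOn_const measure_Ioo_lt_top.ne
  apply hg.mono' hae.aestronglyMeasurable
  apply ae_of_all
  intro t
  rw [Real.norm_eq_abs]
  nlinarith [sq_abs (f t), abs_nonneg (f t), sq_nonneg (|f t| - 1)]

lemma iint_of_ioo {f : ℝ → ℝ} (hf : IntegrableOn f (Set.Ioo 0 T) volume)
    {t₁ t₂ : ℝ} (h0 : 0 ≤ t₁) (h12 : t₁ ≤ t₂) (h2T : t₂ < T) :
    IntervalIntegrable f volume t₁ t₂ := by
  rw [intervalIntegrable_iff]
  apply hf.mono_set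
  rw [Set.uIoc_of_le h12]
  exact fun s hs => ⟨lt_of_le_of_lt h0 hs.1, lt_of_le_of_lt hs.2 h2T⟩

lemma tail_small (hT : 0 < T)
    (hW2 : IntegrableOn (fun t => W' t ^ 2) (Set.Ioo 0 T) volume) :
    ∀ ε > (0:ℝ), ∃ a, 0 ≤ a ∧ a < T ∧ ∀ t₁ t₂, a ≤ t₁ → t₁ ≤ t₂ → t₂ < T →
      (∫ t in t₁..t₂, W' t ^ 2) ≤ ε := by
  intro ε hε
  set μ := volume.restrict (Set.Ioo 0 T) with hμ
  set g : ℝ → ℝ := fun t => W' t ^ 2 with hg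
  set a : ℕ → ℝ := fun n => T - T / (n + 2) with ha
  have ha0 : ∀ n, 0 ≤ a n := by
    intro n
    rw [ha]
    simp only [sub_nonneg]
    exact div_le_self (le_of_lt hT) (by push_cast; linarith [Nat.cast_nonneg (α := ℝ) n])
  have haT : ∀ n, a n < T := by
    intro n
    rw [ha]; simp only
    have : 0 < T / (n + 2) := by positivity
    linarith
  have hlim : Tendsto (fun n => ∫ t, (Set.Ioi (a n)).indicator g t ∂μ) atTop (𝓝 0) := by
    have h0 : (0:ℝ) = ∫ t, (0:ℝ) ∂μ := by simp
    rw [h0]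
    apply tendsto_integral_of_dominated_convergence g
      (fun n => hW2.1.indicator measurableSet_Ioi) hW2
    · intro n
      apply ae_of_all
      intro t
      rw [Set.indicator]
      split
      · rw [Real.norm_eq_abs, abs_of_nonneg (sq_nonneg _)]
      · simpa using sq_nonneg (W' t)
    · apply (ae_restrict_iff' measurableSet_Ioo).2 (ae_of_all _ ?_)
      intro t ht
      have : ∃ N : ℕ, t < a N := by
        obtain ⟨N, hN⟩ := exists_nat_gt (T / (T - t))
        refine ⟨N, ?_⟩
        rw [ha]; simp only
        have hTt : 0 < T - t := by linarith [ht.2]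
        have : T / (T - t) < N + 2 := by linarith [hN]
        have h2 : T / ((N:ℝ) + 2) < T - t := by
          rw [div_lt_iff₀ (by positivity)]
          calc T = (T / (T-t)) * (T - t) := by field_simp
            _ < ((N:ℝ)+2) * (T-t) := by
              apply mul_lt_mul_of_pos_right this hTt
            _ = (T-t) * ((N:ℝ)+2) := by ring
        linarith
      obtain ⟨N, hN⟩ := this
      apply tendsto_const_nhds.congr'
      rw [Filter.EventuallyEq, eventually_atTop]
      refine ⟨N, fun n hn => ?_⟩
      have hmono : a N ≤ a n := by
        rw [ha]; simp only
        have hc : ((N:ℝ)) ≤ (n:ℝ) := by exact_mod_cast hn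
        have : T / ((n:ℝ)+2) ≤ T / ((N:ℝ)+2) :=
          div_le_div_of_nonneg_left (le_of_lt hT) (by positivity) (by linarith)
        linarith
      have : t ∉ Set.Ioi (a n) := by
        simp only [Set.mem_Ioi, not_lt]
        linarith
      exact (Set.indicator_of_notMem this g).symm
  rw [Metric.tendsto_atTop] at hlim
  obtain ⟨N, hN⟩ := hlim ε hε
  have hval := hN N le_rfl
  rw [Real.dist_eq, sub_zero] at hval
  refine ⟨a N, ha0 N, haT N, fun t₁ t₂ h1 h12 h2T => ?_⟩
  have hIti : ∫ t, (Set.Ioi (a N)).indicator g t ∂μ = ∫ t in Set.Ioi (a N), g t ∂μ :=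
    integral_indicator measurableSet_Ioi
  have hIti2 : ∫ t in Set.Ioi (a N), g t ∂μ = ∫ t in Set.Ioo (a N) T, g t := by
    rw [hμ, Measure.restrict_restrict measurableSet_Ioi]
    congr 1
    rw [Set.Ioi_inter_Ioo, max_eq_left (ha0 N)]
  calc (∫ t in t₁..t₂, W' t ^ 2) = ∫ t in Set.Ioc t₁ t₂, g t := by
        rw [intervalIntegral.integral_of_le h12]
    _ ≤ ∫ t in Set.Ioo (a N) T, g t := by
        apply setIntegral_mono_set
        · exact hW2.mono_set (fun s hs => ⟨lt_of_le_of_lt (ha0 N) hs.1, hs.2⟩)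
        · exact ae_of_all _ (fun t => sq_nonneg _)
        · apply HasSubset.Subset.eventuallyLE
          exact fun s hs => ⟨lt_of_le_of_lt h1 hs.1, lt_of_le_of_lt hs.2 h2T⟩
    _ ≤ ε := by
        rw [← hIti2, ← hIti]
        exact le_of_lt (lt_of_le_of_lt (le_abs_self _) hval)

end Meas

section NoBig

lemma beta_gt_one : 1 < 3 * (1 - Real.exp (-2*(1:ℝ))) / 2 := by
  have he : (2.7182818283:ℝ) < Real.exp 1 := Real.exp_one_gt_d9
  have h3 : Real.exp (-2*(1:ℝ)) = (Real.exp 1 * Real.exp 1)⁻¹ := by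
    rw [← Real.exp_add, ← Real.exp_neg]; norm_num
  have h2 : (3:ℝ) < Real.exp 1 * Real.exp 1 := by nlinarith
  have h4 : (Real.exp 1 * Real.exp 1)⁻¹ < 3⁻¹ := by
    apply inv_strictAnti₀ (by norm_num) h2
  rw [h3]
  have : (3:ℝ)⁻¹ = 1/3 := by norm_num
  linarith

lemma nobig (hT : 0 < T) (him : HIM W z T) (hWd : HWD W W' T) (hzd : HZD W z T)
    (hend : HEND W z T)
    (hW1 : IntegrableOn W' (Set.Ioo 0 T) volume)
    (hW2 : IntegrableOn (fun t => W' t ^ 2) (Set.Ioo 0 T) volume)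
    {c : ℝ} (hc : 0 < c) :
    ∀ᶠ t in 𝓝[<] T, UU W z t < c := by
  obtain ⟨a, ha0, haT, htail⟩ := tail_small hT hW2 (c/2) (by positivity)
  have hmem : Set.Ioo a T ∈ 𝓝[<] T := Ioo_mem_nhdsLT haT
  filter_upwards [hmem] with t₁ ht₁
  by_contra hbig
  push_neg at hbig
  have ht₁0 : 0 ≤ t₁ := le_of_lt (lt_of_le_of_lt ha0 ht₁.1)
  have ht₁T : t₁ < T := ht₁.2
  have hIW : ∀ {s₁ s₂ : ℝ}, 0 ≤ s₁ → s₁ ≤ s₂ → s₂ < T → IntervalIntegrable W' volume s₁ s₂ :=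
    fun h1 h2 h3 => iint_of_ioo hW1 h1 h2 h3
  have hIW2 : ∀ {s₁ s₂ : ℝ}, 0 ≤ s₁ → s₁ ≤ s₂ → s₂ < T →
      IntervalIntegrable (fun t => W' t ^ 2) volume s₁ s₂ :=
    fun h1 h2 h3 => iint_of_ioo hW2 h1 h2 h3
  have htl : ∀ {s₁ s₂ : ℝ}, t₁ ≤ s₁ → s₁ ≤ s₂ → s₂ < T →
      (∫ t in s₁..s₂, W' t ^ 2) ≤ c/2 :=
    fun h1 h2 h3 => htail _ _ (le_trans (le_of_lt ht₁.1) h1) h2 h3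
  -- step (a) : u ≥ 7c/8 on [t₁, T)
  have stepa : ∀ s, t₁ ≤ s → s < T → 7*c/8 ≤ UU W z s := by
    intro s hs1 hs2
    have hg := grow him hWd hzd ht₁0 hs1 hs2 (hIW ht₁0 hs1 hs2) (hIW2 ht₁0 hs1 hs2)
      (m := 0) (fun r hr => UUnonneg him r ⟨le_trans ht₁0 hr.1, lt_of_le_of_lt hr.2 hs2⟩)
    rw [show (-2:ℝ)*0 = 0 by ring, Real.exp_zero] at hg
    have h2 := htl le_rfl hs1 hs2
    nlinarith [hg, hbig, h2]
  -- step (b)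
  set δ : ℝ := 1 - Real.exp (-2*(c/2)) with hδ
  have hδpos : 0 < δ := by
    rw [hδ]
    have : Real.exp (-2*(c/2)) < 1 := Real.exp_lt_one_iff.mpr (by linarith)
    linarith
  have stepb : ∀ s, t₁ ≤ s → s < T →
      c + (3*δ/2) * (SS W z s - SS W z t₁) - c/8 ≤ UU W z s := by
    intro s hs1 hs2
    have hreg : ∀ r ∈ Set.Icc t₁ s, c/2 ≤ UU W z r := by
      intro r hr
      have := stepa r hr.1 (lt_of_le_of_lt hr.2 hs2)
      linarith
    have hg := grow him hWd hzd ht₁0 hs1 hs2 (hIW ht₁0 hs1 hs2) (hIW2 ht₁0 hs1 hs2)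
      (m := c/2) hreg
    have h2 := htl le_rfl hs1 hs2
    rw [← hδ] at hg
    nlinarith [hg, hbig, h2]
  -- step (c) : find t₃ with u ≥ 1 from t₃ on
  have hSS := tendsto_SS_atTop him hT hend
  have hev : ∀ᶠ s in 𝓝[<] T,
      (SS W z t₁ + (1 + c) * (2/(3*δ)) ≤ SS W z s ∧ s ∈ Set.Ioo t₁ T) :=
    (hSS.eventually_ge_atTop _).and (Ioo_mem_nhdsLT ht₁T)
  obtain ⟨l, hlT, hl⟩ := mem_nhdsLT_iff_exists_Ioo_subset.1 hev
  set t₃ : ℝ := (max l t₁ + T)/2 with ht₃def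
  have hmax : max l t₁ < T := max_lt hlT ht₁T
  have ht₃1 : max l t₁ < t₃ := by rw [ht₃def]; linarith
  have ht₃T : t₃ < T := by rw [ht₃def]; linarith
  have ht₃t₁ : t₁ < t₃ := lt_of_le_of_lt (le_max_right l t₁) ht₃1
  have ht₃l : l < t₃ := lt_of_le_of_lt (le_max_left l t₁) ht₃1
  have ht₃0 : 0 ≤ t₃ := le_of_lt (lt_of_le_of_lt ht₁0 ht₃t₁)
  have hu1 : ∀ s, t₃ ≤ s → s < T → 1 ≤ UU W z s := by
    intro s hs1 hs2
    have hsl : s ∈ Set.Ioo l T := ⟨lt_of_lt_of_le ht₃l hs1, hs2⟩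
    obtain ⟨hK, hst⟩ := hl hsl
    have hb := stepb s (le_of_lt hst.1) hs2
    have h3δ : 0 < 3*δ/2 := by positivity
    have hdd : (1+c) ≤ (3*δ/2) * (SS W z s - SS W z t₁) := by
      have h5 : (1+c)*(2/(3*δ)) ≤ SS W z s - SS W z t₁ := by linarith
      calc (1+c) = (3*δ/2) * ((1+c)*(2/(3*δ))) := by field_simp
        _ ≤ (3*δ/2) * (SS W z s - SS W z t₁) := by
            exact mul_le_mul_of_nonneg_left h5 (le_of_lt h3δ)
    linarith
  -- step (d)
  set β : ℝ := 3 * (1 - Real.exp (-2*(1:ℝ))) / 2 with hβdef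
  have hβ : 1 < β := beta_gt_one
  have stepd : ∀ s, t₃ ≤ s → s < T →
      UU W z t₃ + β * (SS W z s - SS W z t₃) - c/8 ≤ UU W z s := by
    intro s hs1 hs2
    have hreg : ∀ r ∈ Set.Icc t₃ s, 1 ≤ UU W z r := by
      intro r hr
      exact hu1 r hr.1 (lt_of_le_of_lt hr.2 hs2)
    have hg := grow him hWd hzd ht₃0 hs1 hs2 (hIW ht₃0 hs1 hs2) (hIW2 ht₃0 hs1 hs2)
      (m := 1) hreg
    have h2 := htl (le_of_lt ht₃t₁) hs1 hs2
    rw [← hβdef] at hg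
    linarith
  -- step (e) : contradiction
  have hSU := tendsto_SU_atTop hT him hend
  have hev2 : ∀ᶠ s in 𝓝[<] T,
      ((0 ≤ SS W z s - UU W z s ∧
        (β * SS W z t₃ - UU W z t₃ + c/8 + 1)/(β - 1) ≤ SS W z s) ∧ s ∈ Set.Ioo t₃ T) :=
    ((hSU.eventually_ge_atTop 0).and (hSS.eventually_ge_atTop _)).and
      (Ioo_mem_nhdsLT ht₃T)
  obtain ⟨s₄, ⟨hSU4, hSS4⟩, hs4⟩ := hev2.exists
  have hd := stepd s₄ (le_of_lt hs4.1) hs4.2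
  have hne : (0:ℝ) < β - 1 := by linarith
  have h1 : β * SS W z t₃ - UU W z t₃ + c/8 + 1 ≤ (β - 1) * SS W z s₄ := by
    calc β * SS W z t₃ - UU W z t₃ + c/8 + 1
        = ((β * SS W z t₃ - UU W z t₃ + c/8 + 1)/(β-1)) * (β-1) :=
          (div_mul_cancel₀ _ (ne_of_gt hne)).symm
      _ ≤ SS W z s₄ * (β - 1) := mul_le_mul_of_nonneg_right hSS4 (le_of_lt hne)
      _ = (β - 1) * SS W z s₄ := by ring
  nlinarith [hd, hSU4, h1]

end NoBig


section Conv

lemma sin_arg_eq (him : HIM W z T) (t : ℝ) (ht : t ∈ Set.Ico (0:ℝ) T) :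
    Real.sin ((ww W z t).arg) = Real.exp (-UU W z t) := by
  have hY := Ypos him t ht
  have hR := R2pos him t ht
  rw [Complex.sin_arg]
  have habs : ‖ww W z t‖ = Real.sqrt (R2 W z t) := Complex.norm_def _
  have hsq : Real.sqrt (R2 W z t) = Real.exp (Real.log (R2 W z t) / 2) := by
    rw [← Real.log_sqrt (le_of_lt hR), Real.exp_log (Real.sqrt_pos.2 hR)]
  rw [habs, UU, show -(Real.log (R2 W z t)/2 - Real.log (YY W z t))
      = Real.log (YY W z t) - Real.log (R2 W z t)/2 by ring,
    Real.exp_sub, Real.exp_log hY, ← hsq]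
  rfl

lemma tendsto_UU_zero (hT : 0 < T) (him : HIM W z T) (hWd : HWD W W' T) (hzd : HZD W z T)
    (hend : HEND W z T)
    (hW1 : IntegrableOn W' (Set.Ioo 0 T) volume)
    (hW2 : IntegrableOn (fun t => W' t ^ 2) (Set.Ioo 0 T) volume) :
    Tendsto (UU W z) (𝓝[<] T) (𝓝 0) := by
  apply tendsto_order.2
  constructor
  · intro c hc
    filter_upwards [ev_mem hT] with t ht
    exact lt_of_lt_of_le hc (UUnonneg him t (Set.Ioo_subset_Ico_self ht))
  · intro c hc
    exact nobig hT him hWd hzd hend hW1 hW2 hc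

lemma tendsto_sin_one (hT : 0 < T) (him : HIM W z T)
    (hUU0 : Tendsto (UU W z) (𝓝[<] T) (𝓝 0)) :
    Tendsto (fun t => Real.sin (Complex.arg (z t - (W t : ℂ)))) (𝓝[<] T) (𝓝 1) := by
  have h1 : Tendsto (fun t => Real.exp (-UU W z t)) (𝓝[<] T) (𝓝 1) := by
    have hneg : Tendsto (fun t => -UU W z t) (𝓝[<] T) (𝓝 0) := by simpa using hUU0.neg
    have h2 := (Real.continuous_exp.tendsto 0).comp hneg
    simpa [Function.comp_def] using h2
  apply h1.congr'
  filter_upwards [ev_mem hT] with t ht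
  exact (sin_arg_eq him t (Set.Ioo_subset_Ico_self ht)).symm

end Conv

def BB (ρ : ℝ) (W W' : ℝ → ℝ) (z : ℝ → ℂ) (t : ℝ) : ℝ :=
  W' t + ρ * (XX W z t / R2 W z t)

section Qint

lemma qint_fwd (him : HIM W z T) (hWd : HWD W W' T) (hzd : HZD W z T)
    {t₂ : ℝ} (h2 : t₂ ∈ Set.Ico (0:ℝ) T)
    (hWint : IntervalIntegrable W' volume 0 t₂)
    (hW2int : IntervalIntegrable (fun t => W' t ^ 2) volume 0 t₂) :
    3 * (∫ t in (0:ℝ)..t₂, QQ W z t)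
      ≤ UU W z t₂ - UU W z 0 + (1/4) * ∫ t in (0:ℝ)..t₂, W' t ^ 2 := by
  have hsub := uIcc_sub (T := T) le_rfl h2.1 h2.2
  have key : ∀ s ∈ Set.Icc (0:ℝ) t₂,
      3 * QQ W z s - W' s ^ 2 / 4 ≤ 4 * QQ W z s - W' s * (XX W z s / R2 W z s) := by
    intro s hs
    have hQ : (XX W z s / R2 W z s) ^ 2 = QQ W z s := by rw [QQ, div_pow]
    nlinarith [sq_nonneg (XX W z s / R2 W z s - W' s / 2)]
  have hQint : IntervalIntegrable (QQ W z) volume 0 t₂ :=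
    ((contOn_QQ him hWd hzd).mono hsub).intervalIntegrable
  have hlow : IntervalIntegrable (fun s => 3 * QQ W z s - W' s ^ 2 / 4) volume 0 t₂ :=
    (hQint.const_mul 3).sub (hW2int.div_const 4)
  have hmono := intervalIntegral.integral_mono_on h2.1 hlow
    (integrand_intble him hWd hzd le_rfl h2.1 h2.2 hWint) key
  rw [← UU_FTC him hWd hzd le_rfl h2.1 h2.2 hWint,
    intervalIntegral.integral_sub (hQint.const_mul 3) (hW2int.div_const 4),
    intervalIntegral.integral_const_mul, intervalIntegral.integral_div] at hmono
  linarith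

lemma qint_rev {ρ : ℝ} (hρ : ρ < -4) (him : HIM W z T) (hWd : HWD W W' T) (hzd : HZD W z T)
    {t₂ : ℝ} (h2 : t₂ ∈ Set.Ico (0:ℝ) T)
    (hWint : IntervalIntegrable W' volume 0 t₂)
    (hB2int : IntervalIntegrable (fun t => BB ρ W W' z t ^ 2) volume 0 t₂) :
    (-(4+ρ)/2) * (∫ t in (0:ℝ)..t₂, QQ W z t)
      ≤ UU W z 0 + (1/(2*(-(4+ρ)))) * ∫ t in (0:ℝ)..t₂, BB ρ W W' z t ^ 2 := by
  set κ : ℝ := -(4+ρ) with hκdef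
  have hκ : 0 < κ := by rw [hκdef]; linarith
  have hsub := uIcc_sub (T := T) le_rfl h2.1 h2.2
  have key : ∀ s ∈ Set.Icc (0:ℝ) t₂,
      4 * QQ W z s - W' s * (XX W z s / R2 W z s)
        ≤ -(κ/2) * QQ W z s + BB ρ W W' z s ^ 2 / (2*κ) := by
    intro s hs
    set φ : ℝ := XX W z s / R2 W z s with hφ
    set B : ℝ := BB ρ W W' z s with hB
    have hW' : W' s = B - ρ * φ := by rw [hB, BB, hφ]; ring
    have hQ : φ ^ 2 = QQ W z s := by rw [hφ, QQ, div_pow]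
    have he : (κ*φ + B)^2/(2*κ) = (κ/2)*φ^2 + B*φ + B^2/(2*κ) := by
      field_simp
      ring
    have hsq : 0 ≤ (κ*φ + B)^2/(2*κ) := by positivity
    rw [hW']
    nlinarith [hsq, he, hQ]
  have hQint : IntervalIntegrable (QQ W z) volume 0 t₂ :=
    ((contOn_QQ him hWd hzd).mono hsub).intervalIntegrable
  have hup : IntervalIntegrable
      (fun s => -(κ/2) * QQ W z s + BB ρ W W' z s ^ 2 / (2*κ)) volume 0 t₂ :=
    (hQint.const_mul _).add (hB2int.div_const _)
  have hmono := intervalIntegral.integral_mono_on h2.1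
    (integrand_intble him hWd hzd le_rfl h2.1 h2.2 hWint) hup key
  rw [← UU_FTC him hWd hzd le_rfl h2.1 h2.2 hWint,
    intervalIntegral.integral_add (hQint.const_mul _) (hB2int.div_const _),
    intervalIntegral.integral_const_mul, intervalIntegral.integral_div] at hmono
  have hU2 := UUnonneg him t₂ h2
  have hmono' : UU W z t₂ - UU W z 0
      ≤ (-(κ / 2) * ∫ (x : ℝ) in (0:ℝ)..t₂, QQ W z x)
        + 1/(2*κ) * ∫ (x : ℝ) in (0:ℝ)..t₂, BB ρ W W' z x ^ 2 := by
    rw [one_div, inv_mul_eq_div]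
    exact hmono
  linarith

end Qint

section Lint

lemma lint_of_uniform (hT : 0 < T) {g : ℝ → ℝ}
    (hcont : ContinuousOn g (Set.Ico 0 T))
    (hg0 : ∀ t, 0 ≤ g t)
    {C : ℝ}
    (hbnd : ∀ t₂ ∈ Set.Ico (0:ℝ) T, (∫ t in (0:ℝ)..t₂, g t) ≤ C) :
    ∫⁻ t in Set.Ioo (0:ℝ) T, ENNReal.ofReal (g t) ≤ ENNReal.ofReal C := by
  set a : ℕ → ℝ := fun n => T - T / (n + 2) with ha
  have ha0 : ∀ n, 0 ≤ a n := by
    intro n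
    rw [ha]
    simp only [sub_nonneg]
    exact div_le_self (le_of_lt hT) (by push_cast; linarith [Nat.cast_nonneg (α := ℝ) n])
  have haT : ∀ n, a n < T := by
    intro n
    rw [ha]; simp only
    have : 0 < T / ((n:ℝ) + 2) := by positivity
    linarith
  have hamono : Monotone a := by
    intro n m hnm
    rw [ha]; simp only
    have hc : ((n:ℝ)) ≤ (m:ℝ) := by exact_mod_cast hnm
    have : T / ((m:ℝ)+2) ≤ T / ((n:ℝ)+2) :=
      div_le_div_of_nonneg_left (le_of_lt hT) (by positivity) (by linarith)
    linarith
  have haex : ∀ x : ℝ, x < T → ∃ n, x < a n := by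
    intro x hx
    obtain ⟨N, hN⟩ := exists_nat_gt (T / (T - x))
    refine ⟨N, ?_⟩
    rw [ha]; simp only
    have hTx : 0 < T - x := by linarith
    have h2 : T / ((N:ℝ) + 2) < T - x := by
      rw [div_lt_iff₀ (by positivity)]
      calc T = (T / (T-x)) * (T - x) := by field_simp
        _ < ((N:ℝ)+2) * (T-x) := mul_lt_mul_of_pos_right (by linarith) hTx
        _ = (T-x) * ((N:ℝ)+2) := by ring
    linarith
  set f : ℕ → ℝ → ℝ≥0∞ :=
    fun n t => (Set.Ioo (0:ℝ) (a n)).indicator (fun t => ENNReal.ofReal (g t)) t with hf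
  have hfm : ∀ n, AEMeasurable (f n) volume := by
    intro n
    rw [hf]
    simp only
    rw [aemeasurable_indicator_iff measurableSet_Ioo]
    apply AEMeasurable.ennreal_ofReal
    have hsubn : Set.Ioo (0:ℝ) (a n) ⊆ Set.Ico (0:ℝ) T :=
      fun s hs => ⟨le_of_lt hs.1, lt_trans hs.2 (haT n)⟩
    exact (hcont.mono hsubn).aemeasurable measurableSet_Ioo
  have hfmono : ∀ x, Monotone fun n => f n x := by
    intro x n m hnm
    rw [hf]
    exact Set.indicator_le_indicator_of_subset
      (Set.Ioo_subset_Ioo_right (hamono hnm)) (fun _ => zero_le) x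
  have hsup : ∀ x, (⨆ n, f n x)
      = (Set.Ioo (0:ℝ) T).indicator (fun t => ENNReal.ofReal (g t)) x := by
    intro x
    by_cases hx : x ∈ Set.Ioo (0:ℝ) T
    · rw [Set.indicator_of_mem hx]
      apply le_antisymm
      · apply iSup_le
        intro n
        by_cases hxn : x ∈ Set.Ioo (0:ℝ) (a n)
        · rw [hf]; simp only; rw [Set.indicator_of_mem hxn]
        · rw [hf]; simp only; rw [Set.indicator_of_notMem hxn]; exact zero_le
      · obtain ⟨n, hn⟩ := haex x hx.2
        apply le_iSup_of_le n
        have hxm : x ∈ Set.Ioo (0:ℝ) (a n) := ⟨hx.1, hn⟩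
        rw [hf]; simp only; rw [Set.indicator_of_mem hxm]
    · rw [Set.indicator_of_notMem hx]
      apply le_antisymm _ zero_le
      apply iSup_le
      intro n
      have : x ∉ Set.Ioo (0:ℝ) (a n) := by
        intro hxx
        exact hx ⟨hxx.1, lt_trans hxx.2 (haT n)⟩
      rw [hf]; simp only; rw [Set.indicator_of_notMem this]
  have hint : ∀ n, ∫⁻ x, f n x ≤ ENNReal.ofReal C := by
    intro n
    rw [hf]
    simp only
    rw [lintegral_indicator measurableSet_Ioo]
    have hIg : IntegrableOn g (Set.Ioc 0 (a n)) volume := by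
      apply IntegrableOn.mono_set _ Set.Ioc_subset_Icc_self
      apply ContinuousOn.integrableOn_Icc
      exact hcont.mono (fun s hs => ⟨hs.1, lt_of_le_of_lt hs.2 (haT n)⟩)
    calc ∫⁻ x in Set.Ioo 0 (a n), ENNReal.ofReal (g x)
        ≤ ∫⁻ x in Set.Ioc 0 (a n), ENNReal.ofReal (g x) :=
          lintegral_mono' (Measure.restrict_mono Set.Ioo_subset_Ioc_self le_rfl) le_rfl
      _ = ENNReal.ofReal (∫ x in Set.Ioc 0 (a n), g x) :=
          (ofReal_integral_eq_lintegral_ofReal hIg (ae_of_all _ (fun t => hg0 t))).symm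
      _ = ENNReal.ofReal (∫ x in (0:ℝ)..(a n), g x) := by
          rw [intervalIntegral.integral_of_le (ha0 n)]
      _ ≤ ENNReal.ofReal C := ENNReal.ofReal_le_ofReal (hbnd (a n) ⟨ha0 n, haT n⟩)
  calc ∫⁻ t in Set.Ioo (0:ℝ) T, ENNReal.ofReal (g t)
      = ∫⁻ t, (Set.Ioo (0:ℝ) T).indicator (fun t => ENNReal.ofReal (g t)) t :=
        (lintegral_indicator measurableSet_Ioo _).symm
    _ = ∫⁻ t, ⨆ n, f n t := by
        apply lintegral_congr
        intro t
        rw [hsup]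
    _ = ⨆ n, ∫⁻ t, f n t := lintegral_iSup' hfm (ae_of_all _ hfmono)
    _ ≤ ENNReal.ofReal C := iSup_le hint

lemma UU_bounded (hT : 0 < T) (him : HIM W z T) (hWd : HWD W W' T) (hzd : HZD W z T)
    (hend : HEND W z T)
    (hW1 : IntegrableOn W' (Set.Ioo 0 T) volume)
    (hW2 : IntegrableOn (fun t => W' t ^ 2) (Set.Ioo 0 T) volume) :
    ∃ M, ∀ t ∈ Set.Ico (0:ℝ) T, UU W z t ≤ M := by
  have h1 := nobig hT him hWd hzd hend hW1 hW2 one_pos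
  obtain ⟨l, hlT, hl⟩ := mem_nhdsLT_iff_exists_Ioo_subset.1 h1
  set l₀ : ℝ := max l 0 with hl₀
  have hl₀T : l₀ < T := max_lt hlT hT
  have hsub : Set.Icc (0:ℝ) l₀ ⊆ Set.Ico 0 T :=
    fun s hs => ⟨hs.1, lt_of_le_of_lt hs.2 hl₀T⟩
  obtain ⟨x, hx, hmax⟩ := isCompact_Icc.exists_isMaxOn
    (Set.nonempty_Icc.2 (le_max_right l 0)) ((contOn_UU him hWd hzd).mono hsub)
  refine ⟨max (UU W z x) 1, fun t ht => ?_⟩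
  by_cases htl : t ≤ l₀
  · exact le_trans (hmax ⟨ht.1, htl⟩) (le_max_left _ _)
  · push_neg at htl
    have ht2 : t ∈ Set.Ioo l T := ⟨lt_of_le_of_lt (le_max_left l 0) htl, ht.2⟩
    exact le_trans (le_of_lt (hl ht2)) (le_max_right _ _)

end Lint

section Main

lemma beq (ρ : ℝ) (t : ℝ) :
    W' t - ρ * ((1:ℂ)/((W t : ℂ) - z t)).re = BB ρ W W' z t := by
  have hw : ((W t:ℂ) - z t) = -(ww W z t) := by rw [ww]; ring
  rw [BB, hw, one_div, inv_neg, Complex.neg_re, Complex.inv_re, XX, R2]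
  ring

lemma intSq_le_total {f : ℝ → ℝ} (hf : IntegrableOn (fun t => f t ^ 2) (Set.Ioo 0 T) volume)
    {t₂ : ℝ} (h2 : t₂ ∈ Set.Ico (0:ℝ) T) :
    (∫ t in (0:ℝ)..t₂, f t ^ 2) ≤ ∫ t in Set.Ioo (0:ℝ) T, f t ^ 2 := by
  rw [intervalIntegral.integral_of_le h2.1]
  apply setIntegral_mono_set hf (ae_of_all _ (fun t => sq_nonneg _))
  apply HasSubset.Subset.eventuallyLE
  exact fun s hs => ⟨hs.1, lt_of_le_of_lt hs.2 h2.2⟩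

lemma QQ_nonneg (t : ℝ) : 0 ≤ QQ W z t := by rw [QQ]; positivity

lemma main_forward {ρ : ℝ} (hT : 0 < T) (him : HIM W z T) (hWd : HWD W W' T)
    (hzd : HZD W z T) (hend : HEND W z T)
    (hfinW : ∫⁻ t in Set.Ioo (0:ℝ) T, ENNReal.ofReal ((1/2) * (W' t)^2) < ⊤) :
    ∫⁻ t in Set.Ioo (0:ℝ) T, ENNReal.ofReal ((1/2) * (BB ρ W W' z t)^2) < ⊤ := by
  have hae := aemW' hT hWd
  have hW2 := integrableOn_of_sq hae hfinW
  have hW1 := integrableOn_self_of_sq hae hW2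
  obtain ⟨M, hM⟩ := UU_bounded hT him hWd hzd hend hW1 hW2
  set ITot : ℝ := ∫ t in Set.Ioo (0:ℝ) T, W' t ^ 2 with hITot
  set Cq : ℝ := (M + (1/4) * ITot)/3 with hCq
  have hQb : ∀ t₂ ∈ Set.Ico (0:ℝ) T, (∫ t in (0:ℝ)..t₂, QQ W z t) ≤ Cq := by
    intro t₂ h2
    have hq := qint_fwd him hWd hzd h2 (iint_of_ioo hW1 le_rfl h2.1 h2.2)
      (iint_of_ioo hW2 le_rfl h2.1 h2.2)
    have h0T : (0:ℝ) ∈ Set.Ico (0:ℝ) T := ⟨le_rfl, hT⟩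
    have hU0 := UUnonneg him 0 h0T
    have hUt := hM t₂ h2
    have hIT := intSq_le_total hW2 h2
    rw [hCq]
    linarith
  have hQtop : ∫⁻ t in Set.Ioo (0:ℝ) T, ENNReal.ofReal (QQ W z t) ≤ ENNReal.ofReal Cq :=
    lint_of_uniform hT (contOn_QQ him hWd hzd) (QQ_nonneg) hQb
  have hpt : ∀ t, ENNReal.ofReal ((1/2) * (BB ρ W W' z t)^2)
      ≤ ENNReal.ofReal (W' t ^ 2) + ENNReal.ofReal (ρ^2 * QQ W z t) := by
    intro t
    calc ENNReal.ofReal ((1/2) * (BB ρ W W' z t)^2)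
        ≤ ENNReal.ofReal (W' t ^ 2 + ρ^2 * QQ W z t) := by
          apply ENNReal.ofReal_le_ofReal
          have hq : (XX W z t / R2 W z t) ^ 2 = QQ W z t := by rw [QQ, div_pow]
          rw [BB]
          nlinarith [sq_nonneg (W' t - ρ * (XX W z t / R2 W z t))]
      _ ≤ ENNReal.ofReal (W' t ^ 2) + ENNReal.ofReal (ρ^2 * QQ W z t) :=
          ENNReal.ofReal_add_le
  have hfin1 : ∫⁻ t in Set.Ioo (0:ℝ) T, ENNReal.ofReal (W' t ^ 2) < ⊤ :=
    (hasFiniteIntegral_iff_ofReal (ae_of_all _ (fun t => sq_nonneg _))).1 hW2.2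
  have hfin2 : ∫⁻ t in Set.Ioo (0:ℝ) T, ENNReal.ofReal (ρ^2 * QQ W z t) < ⊤ := by
    have heq : ∀ t, ENNReal.ofReal (ρ^2 * QQ W z t)
        = ENNReal.ofReal (ρ^2) * ENNReal.ofReal (QQ W z t) :=
      fun t => ENNReal.ofReal_mul (sq_nonneg ρ)
    calc ∫⁻ t in Set.Ioo (0:ℝ) T, ENNReal.ofReal (ρ^2 * QQ W z t)
        = ∫⁻ t in Set.Ioo (0:ℝ) T, ENNReal.ofReal (ρ^2) * ENNReal.ofReal (QQ W z t) :=
          lintegral_congr (fun t => heq t)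
      _ = ENNReal.ofReal (ρ^2) * ∫⁻ t in Set.Ioo (0:ℝ) T, ENNReal.ofReal (QQ W z t) :=
          lintegral_const_mul' _ _ ENNReal.ofReal_ne_top
      _ ≤ ENNReal.ofReal (ρ^2) * ENNReal.ofReal Cq := by
          exact mul_le_mul_right hQtop _
      _ < ⊤ := ENNReal.mul_lt_top ENNReal.ofReal_lt_top ENNReal.ofReal_lt_top
  calc ∫⁻ t in Set.Ioo (0:ℝ) T, ENNReal.ofReal ((1/2) * (BB ρ W W' z t)^2)
      ≤ ∫⁻ t in Set.Ioo (0:ℝ) T,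
          (ENNReal.ofReal (W' t ^ 2) + ENNReal.ofReal (ρ^2 * QQ W z t)) :=
        lintegral_mono (fun t => hpt t)
    _ = (∫⁻ t in Set.Ioo (0:ℝ) T, ENNReal.ofReal (W' t ^ 2))
        + ∫⁻ t in Set.Ioo (0:ℝ) T, ENNReal.ofReal (ρ^2 * QQ W z t) := by
        apply lintegral_add_left'
        exact (hae.pow_const 2).ennreal_ofReal
    _ < ⊤ := ENNReal.add_lt_top.2 ⟨hfin1, hfin2⟩

lemma main_reverse {ρ : ℝ} (hρ : ρ < -4) (hT : 0 < T) (him : HIM W z T) (hWd : HWD W W' T)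
    (hzd : HZD W z T)
    (hfinB : ∫⁻ t in Set.Ioo (0:ℝ) T, ENNReal.ofReal ((1/2) * (BB ρ W W' z t)^2) < ⊤) :
    ∫⁻ t in Set.Ioo (0:ℝ) T, ENNReal.ofReal ((1/2) * (W' t)^2) < ⊤ := by
  set κ : ℝ := -(4+ρ) with hκdef
  have hκ : 0 < κ := by rw [hκdef]; linarith
  have haeφ : AEMeasurable (fun t => XX W z t / R2 W z t) (volume.restrict (Set.Ioo 0 T)) :=
    ((contOn_XdivR2 him hWd hzd).mono Set.Ioo_subset_Ico_self).aemeasurable measurableSet_Ioo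
  have haeB : AEMeasurable (BB ρ W W' z) (volume.restrict (Set.Ioo 0 T)) := by
    have := (aemW' hT hWd).add (haeφ.const_mul ρ)
    apply this.congr
    apply ae_of_all
    intro t
    rw [BB]; rfl
  have hB2 := integrableOn_of_sq haeB hfinB
  have hB1 := integrableOn_self_of_sq haeB hB2
  have hWeq : W' = fun t => BB ρ W W' z t - ρ * (XX W z t / R2 W z t) :=
    funext (fun t => by rw [BB]; ring)
  have hWiint : ∀ {t₂ : ℝ}, t₂ ∈ Set.Ico (0:ℝ) T → IntervalIntegrable W' volume 0 t₂ := by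
    intro t₂ h2
    have hsub := uIcc_sub (T := T) le_rfl h2.1 h2.2
    rw [hWeq]
    exact (iint_of_ioo hB1 le_rfl h2.1 h2.2).sub
      ((((contOn_XdivR2 him hWd hzd).mono hsub).intervalIntegrable).const_mul ρ)
  set IB : ℝ := ∫ t in Set.Ioo (0:ℝ) T, BB ρ W W' z t ^ 2 with hIB
  set Cq : ℝ := (2/κ) * (UU W z 0 + (1/(2*κ)) * IB) with hCq
  have hQb : ∀ t₂ ∈ Set.Ico (0:ℝ) T, (∫ t in (0:ℝ)..t₂, QQ W z t) ≤ Cq := by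
    intro t₂ h2
    have hq := qint_rev hρ him hWd hzd h2 (hWiint h2) (iint_of_ioo hB2 le_rfl h2.1 h2.2)
    rw [← hκdef] at hq
    have hIT := intSq_le_total hB2 h2
    rw [← hIB] at hIT
    have h1 : (κ/2) * (∫ t in (0:ℝ)..t₂, QQ W z t)
        ≤ UU W z 0 + (1/(2*κ)) * IB := by
      have h2κ : 0 ≤ 1/(2*κ) := by positivity
      have := mul_le_mul_of_nonneg_left hIT h2κ
      linarith
    rw [hCq]
    have hfe : (2/κ) * ((κ/2) * (∫ t in (0:ℝ)..t₂, QQ W z t))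
        = ∫ t in (0:ℝ)..t₂, QQ W z t := by
      field_simp
    calc (∫ t in (0:ℝ)..t₂, QQ W z t)
        = (2/κ) * ((κ/2) * (∫ t in (0:ℝ)..t₂, QQ W z t)) := hfe.symm
      _ ≤ (2/κ) * (UU W z 0 + (1/(2*κ)) * IB) :=
          mul_le_mul_of_nonneg_left h1 (by positivity)
  have hQtop : ∫⁻ t in Set.Ioo (0:ℝ) T, ENNReal.ofReal (QQ W z t) ≤ ENNReal.ofReal Cq :=
    lint_of_uniform hT (contOn_QQ him hWd hzd) (QQ_nonneg) hQb
  have hpt : ∀ t, ENNReal.ofReal ((1/2) * (W' t)^2)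
      ≤ ENNReal.ofReal (BB ρ W W' z t ^ 2) + ENNReal.ofReal (ρ^2 * QQ W z t) := by
    intro t
    calc ENNReal.ofReal ((1/2) * (W' t)^2)
        ≤ ENNReal.ofReal (BB ρ W W' z t ^ 2 + ρ^2 * QQ W z t) := by
          apply ENNReal.ofReal_le_ofReal
          have hq : (XX W z t / R2 W z t) ^ 2 = QQ W z t := by rw [QQ, div_pow]
          have hW't : W' t = BB ρ W W' z t - ρ * (XX W z t / R2 W z t) := by rw [BB]; ring
          rw [hW't]
          nlinarith [sq_nonneg (BB ρ W W' z t + ρ * (XX W z t / R2 W z t))]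
      _ ≤ ENNReal.ofReal (BB ρ W W' z t ^ 2) + ENNReal.ofReal (ρ^2 * QQ W z t) :=
          ENNReal.ofReal_add_le
  have hfin1 : ∫⁻ t in Set.Ioo (0:ℝ) T, ENNReal.ofReal (BB ρ W W' z t ^ 2) < ⊤ :=
    (hasFiniteIntegral_iff_ofReal (ae_of_all _ (fun t => sq_nonneg _))).1 hB2.2
  have hfin2 : ∫⁻ t in Set.Ioo (0:ℝ) T, ENNReal.ofReal (ρ^2 * QQ W z t) < ⊤ := by
    calc ∫⁻ t in Set.Ioo (0:ℝ) T, ENNReal.ofReal (ρ^2 * QQ W z t)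
        = ∫⁻ t in Set.Ioo (0:ℝ) T, ENNReal.ofReal (ρ^2) * ENNReal.ofReal (QQ W z t) :=
          lintegral_congr (fun t => ENNReal.ofReal_mul (sq_nonneg ρ))
      _ = ENNReal.ofReal (ρ^2) * ∫⁻ t in Set.Ioo (0:ℝ) T, ENNReal.ofReal (QQ W z t) :=
          lintegral_const_mul' _ _ ENNReal.ofReal_ne_top
      _ ≤ ENNReal.ofReal (ρ^2) * ENNReal.ofReal Cq := mul_le_mul_right hQtop _
      _ < ⊤ := ENNReal.mul_lt_top ENNReal.ofReal_lt_top ENNReal.ofReal_lt_top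
  calc ∫⁻ t in Set.Ioo (0:ℝ) T, ENNReal.ofReal ((1/2) * (W' t)^2)
      ≤ ∫⁻ t in Set.Ioo (0:ℝ) T,
          (ENNReal.ofReal (BB ρ W W' z t ^ 2) + ENNReal.ofReal (ρ^2 * QQ W z t)) :=
        lintegral_mono (fun t => hpt t)
    _ = (∫⁻ t in Set.Ioo (0:ℝ) T, ENNReal.ofReal (BB ρ W W' z t ^ 2))
        + ∫⁻ t in Set.Ioo (0:ℝ) T, ENNReal.ofReal (ρ^2 * QQ W z t) := by
        apply lintegral_add_left'
        exact (haeB.pow_const 2).ennreal_ofReal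
    _ < ⊤ := ENNReal.add_lt_top.2 ⟨hfin1, hfin2⟩

end Main

end S15

end Stmt15Aux

/-- Proposition 6.3: for `ρ < -4` and a simple curve driven by `W` growing towards
the interior force point `z₀ ∈ ℍ` (`|z_t - W_t| → 0` as `t → T⁻`), the ρ-Loewner
energy is finite iff the ordinary Loewner energy is; and if finite then
`sin θ_t → 1` (i.e. `-log sin θ_t → 0`) as `t → T⁻`, where `θ_t = arg(z_t - W_t)`.
Energies are taken in `ℝ≥0∞`. -/
theorem stmt15 (ρ T : ℝ) (hρ : ρ < -4) (hT : 0 < T) (z₀ : ℂ) (hz₀ : 0 < z₀.im)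
    (W W' : ℝ → ℝ) (z : ℝ → ℂ) (hW0 : W 0 = 0) (hz0 : z 0 = z₀)
    (hWd : ∀ t ∈ Set.Ico (0:ℝ) T, HasDerivAt W (W' t) t)
    (hzd : ∀ t ∈ Set.Ico (0:ℝ) T, HasDerivAt z (2/(z t - (W t : ℂ))) t)
    (him : ∀ t ∈ Set.Ico (0:ℝ) T, 0 < (z t).im)
    (hend : Tendsto (fun t => ‖z t - (W t : ℂ)‖)
      (nhdsWithin T (Set.Iio T)) (nhds 0)) :
    ((∫⁻ t in Set.Ioo (0:ℝ) T,
        ENNReal.ofReal ((1/2) * (W' t - ρ * ((1:ℂ)/((W t : ℂ) - z t)).re)^2) < ⊤)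
      ↔ (∫⁻ t in Set.Ioo (0:ℝ) T, ENNReal.ofReal ((1/2) * (W' t)^2) < ⊤)) ∧
    ((∫⁻ t in Set.Ioo (0:ℝ) T, ENNReal.ofReal ((1/2) * (W' t)^2) < ⊤) →
      Tendsto (fun t => Real.sin (Complex.arg (z t - (W t : ℂ))))
        (nhdsWithin T (Set.Iio T)) (nhds 1)) := by
  have hconv : (∫⁻ t in Set.Ioo (0:ℝ) T,
      ENNReal.ofReal ((1/2) * (W' t - ρ * ((1:ℂ)/((W t : ℂ) - z t)).re)^2))
      = ∫⁻ t in Set.Ioo (0:ℝ) T, ENNReal.ofReal ((1/2) * (S15.BB ρ W W' z t)^2) := by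
    apply lintegral_congr
    intro t
    rw [S15.beq]
  constructor
  · constructor
    · intro h
      exact S15.main_reverse hρ hT him hWd hzd (hconv ▸ h)
    · intro h
      rw [hconv]
      exact S15.main_forward hT him hWd hzd hend h
  · intro h
    have hae := S15.aemW' hT hWd
    have hW2 := S15.integrableOn_of_sq hae h
    have hW1 := S15.integrableOn_self_of_sq hae hW2
    exact S15.tendsto_sin_one hT him
      (S15.tendsto_UU_zero hT him hWd hzd hend hW1 hW2)
end
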